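/- arXiv:2404.07100 — 8 statements merged into one kernel-verified Lean document; each statement's English description precedes it below -/
import Mathlib

section
/- Let M, K, L be positive integers with K ≤ M. Let Γ₁, …, Γ_L be M×M positive semidefinite Hermitian complex matrices, each of rank at most K, let w₁, …, w_L be positive real numbers with w₁ + ⋯ + w_L = 1, and set Γ = Σ_{ℓ=1}^L w_ℓ Γ_ℓ. Then Γ₁ = Γ₂ = ⋯ = Γ_L if and only if for every k ∈ {1, …, K} and every ℓ ∈ {1, …, L}, the k-th largest eigenvalue of Γ_ℓ equals the k-th largest eigenvalue of Γ. -/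
/-!
Since each `Γ ℓ` has rank at most `K`, its eigenvalues beyond the `K`-th vanish; if its top `K`
eigenvalues are those of the average `Γ̄ = ∑ w ℓ • Γ ℓ`, comparing traces forces the remaining
eigenvalues of the positive semidefinite `Γ̄` to vanish too. So every `Γ ℓ` has the spectrum of
`Γ̄`, hence the same Frobenius norm, and the variance identity
`∑ w ℓ ‖Γ ℓ - Γ̄‖² = ∑ w ℓ ‖Γ ℓ‖² - ‖Γ̄‖² = 0` gives `Γ ℓ = Γ̄` for every `ℓ`.
-/

open scoped BigOperators ComplexOrder

/-- The `k`-th largest value of a finite real tuple (`k = 0` is the largest). -/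
noncomputable def kthLargest {M : ℕ} (f : Fin M → ℝ) (k : Fin M) : ℝ :=
  (f ∘ Tuple.sort f) k.rev

open Finset Matrix

section kthLargest

variable {M : ℕ}

theorem kthLargest_antitone (f : Fin M → ℝ) : Antitone (kthLargest f) :=
  (Tuple.monotone_sort f).comp_antitone Fin.rev_anti

theorem sum_kthLargest {β : Type*} [AddCommMonoid β] (f : Fin M → ℝ) (g : ℝ → β) :
    ∑ k, g (kthLargest f k) = ∑ i, g (f i) :=
  Fintype.sum_equiv (Fin.revPerm.trans (Tuple.sort f)) _ _ fun _ => rfl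

theorem kthLargest_nonneg {f : Fin M → ℝ} (hf : ∀ i, 0 ≤ f i) (k : Fin M) :
    0 ≤ kthLargest f k :=
  hf _

theorem kthLargest_eq_zero_of_card_ne_zero_le {f : Fin M → ℝ} (hf : ∀ i, 0 ≤ f i) {K : ℕ}
    (hcard : Fintype.card {i // f i ≠ 0} ≤ K) {k : Fin M} (hk : K ≤ k) :
    kthLargest f k = 0 := by
  by_contra hne
  have hpos : ∀ j ≤ k, f (Tuple.sort f j.rev) ≠ 0 := fun j hj =>
    (((kthLargest_nonneg hf k).lt_of_ne' hne).trans_le (kthLargest_antitone f hj)).ne'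
  have : (k : ℕ) + 1 ≤ Fintype.card {i // f i ≠ 0} := by
    rw [← Fin.card_Iic, Fintype.card_subtype]
    refine card_le_card_of_injOn (fun j => Tuple.sort f j.rev) (fun j hj => ?_) ?_
    · simpa using hpos j (mem_Iic.mp hj)
    · exact ((Tuple.sort f).injective.comp Fin.rev_injective).injOn
  omega

end kthLargest

namespace Matrix

variable {𝕜 : Type*} [RCLike 𝕜]

theorem sum_smul_conjTranspose_sub_mul_sub {ι m n : Type*} [Fintype ι] [Fintype m]
    (A : ι → Matrix m n 𝕜) (w : ι → ℝ) (hw : ∑ i, w i = 1) :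
    ∑ i, (w i : 𝕜) • (A i - ∑ j, (w j : 𝕜) • A j)ᴴ * (A i - ∑ j, (w j : 𝕜) • A j) =
      ∑ i, (w i : 𝕜) • (A i)ᴴ * A i - (∑ j, (w j : 𝕜) • A j)ᴴ * ∑ j, (w j : 𝕜) • A j := by
  set Ā := ∑ j, (w j : 𝕜) • A j
  have hĀ : ∑ i, (w i : 𝕜) • (A i)ᴴ = Āᴴ := by
    simp [Ā, conjTranspose_sum, conjTranspose_smul]
  have hw' : ∑ i, (w i : 𝕜) = 1 := by exact_mod_cast congrArg ((↑) : ℝ → 𝕜) hw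
  have hterm : ∀ i, (w i : 𝕜) • (A i - Ā)ᴴ * (A i - Ā) =
      (w i : 𝕜) • (A i)ᴴ * A i - (w i : 𝕜) • (A i)ᴴ * Ā - Āᴴ * ((w i : 𝕜) • A i)
        + (w i : 𝕜) • (Āᴴ * Ā) := fun i => by
    simp only [conjTranspose_sub, smul_sub, Matrix.sub_mul, Matrix.mul_sub, smul_mul,
      Matrix.mul_smul]
    abel
  rw [sum_congr rfl fun i _ => hterm i]
  simp only [sum_add_distrib, sum_sub_distrib, ← Matrix.sum_mul, ← Matrix.mul_sum, ← sum_smul, hĀ,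
    hw', one_smul]
  abel

theorem eq_sum_smul_of_trace_conjTranspose_mul_self_eq {ι m n : Type*} [Fintype ι] [Fintype m]
    [Fintype n] (A : ι → Matrix m n 𝕜) (w : ι → ℝ) (hw : ∀ i, 0 < w i) (hsum : ∑ i, w i = 1)
    (h : ∀ i, ((A i)ᴴ * A i).trace =
      ((∑ j, (w j : 𝕜) • A j)ᴴ * ∑ j, (w j : 𝕜) • A j).trace) (i : ι) :
    A i = ∑ j, (w j : 𝕜) • A j := by
  set Ā := ∑ j, (w j : 𝕜) • A j
  have hw' : ∑ i, (w i : 𝕜) = 1 := by exact_mod_cast congrArg ((↑) : ℝ → 𝕜) hsum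
  have hvar : ∑ i, (w i : 𝕜) * ((A i - Ā)ᴴ * (A i - Ā)).trace = 0 := calc
    _ = (∑ i, (w i : 𝕜) • (A i - Ā)ᴴ * (A i - Ā)).trace := by
      simp only [trace_sum, smul_mul, trace_smul, smul_eq_mul]
    _ = (∑ i, (w i : 𝕜) • (A i)ᴴ * A i - Āᴴ * Ā).trace := by
      rw [sum_smul_conjTranspose_sub_mul_sub A w hsum]
    _ = (∑ i, (w i : 𝕜)) * (Āᴴ * Ā).trace - (Āᴴ * Ā).trace := by
      simp only [trace_sub, trace_sum, smul_mul, trace_smul, h, smul_eq_mul, sum_mul]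
    _ = 0 := by rw [hw', one_mul, sub_self]
  have hnonneg : ∀ i ∈ univ, 0 ≤ (w i : 𝕜) * ((A i - Ā)ᴴ * (A i - Ā)).trace := fun i _ =>
    mul_nonneg (RCLike.ofReal_nonneg.mpr (hw i).le)
      (posSemidef_conjTranspose_mul_self _).trace_nonneg
  have hzero := (sum_eq_zero_iff_of_nonneg hnonneg).mp hvar i (mem_univ i)
  rw [mul_eq_zero, RCLike.ofReal_eq_zero, trace_conjTranspose_mul_self_eq_zero_iff,
    sub_eq_zero] at hzero
  exact hzero.resolve_left (hw i).ne'

theorem IsHermitian.trace_conjTranspose_mul_self {n : Type*} [Fintype n] [DecidableEq n]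
    {A : Matrix n n 𝕜} (hA : A.IsHermitian) :
    (Aᴴ * A).trace = ∑ i, (hA.eigenvalues i : 𝕜) ^ 2 := by
  rw [hA.eq]
  conv_lhs => rw [hA.spectral_theorem, ← map_mul, Unitary.conjStarAlgAut_apply, trace_mul_cycle,
    Unitary.coe_star_mul_self, Matrix.one_mul, diagonal_mul_diagonal, trace_diagonal]
  simp [sq]

section kthLargest

variable {M : ℕ} {A B : Matrix (Fin M) (Fin M) 𝕜}

theorem IsHermitian.trace_eq_sum_kthLargest (hA : A.IsHermitian) :
    A.trace = ∑ k, (kthLargest hA.eigenvalues k : 𝕜) := by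
  rw [hA.trace_eq_sum_eigenvalues, sum_kthLargest]

theorem IsHermitian.trace_conjTranspose_mul_self_eq_of_kthLargest_eq (hA : A.IsHermitian)
    (hB : B.IsHermitian) (h : kthLargest hA.eigenvalues = kthLargest hB.eigenvalues) :
    (Aᴴ * A).trace = (Bᴴ * B).trace := by
  rw [hA.trace_conjTranspose_mul_self, hB.trace_conjTranspose_mul_self,
    ← sum_kthLargest hA.eigenvalues (fun x => (x : 𝕜) ^ 2), h]
  exact sum_kthLargest hB.eigenvalues (fun x => (x : 𝕜) ^ 2)

theorem PosSemidef.kthLargest_eigenvalues_eq_zero_of_rank_le (hA : A.PosSemidef) {K : ℕ}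
    (hrank : A.rank ≤ K) {k : Fin M} (hk : K ≤ k) :
    kthLargest hA.isHermitian.eigenvalues k = 0 :=
  kthLargest_eq_zero_of_card_ne_zero_le hA.eigenvalues_nonneg
    (hA.isHermitian.rank_eq_card_non_zero_eigs ▸ hrank) hk

theorem kthLargest_eigenvalues_eq_of_rank_le {ι : Type*} [Fintype ι] {K : ℕ}
    {Γ : ι → Matrix (Fin M) (Fin M) 𝕜} (hpsd : ∀ ℓ, (Γ ℓ).PosSemidef) (hrank : ∀ ℓ, (Γ ℓ).rank ≤ K)
    (w : ι → ℝ) (hw : ∀ ℓ, 0 ≤ w ℓ) (hsum : ∑ ℓ, w ℓ = 1)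
    (hbar : (∑ ℓ, (w ℓ : 𝕜) • Γ ℓ).IsHermitian)
    (h : ∀ k : Fin M, (k : ℕ) < K → ∀ ℓ,
      kthLargest (hpsd ℓ).isHermitian.eigenvalues k = kthLargest hbar.eigenvalues k) (ℓ : ι) :
    kthLargest (hpsd ℓ).isHermitian.eigenvalues = kthLargest hbar.eigenvalues := by
  set t : Fin M → ℝ := fun k => if (k : ℕ) < K then kthLargest hbar.eigenvalues k else 0
  have hΓt : ∀ ℓ, kthLargest (hpsd ℓ).isHermitian.eigenvalues = t := fun ℓ => funext fun k => by
    by_cases hk : (k : ℕ) < K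
    · simp only [t, if_pos hk, h k hk ℓ]
    · simp only [t, if_neg hk, (hpsd ℓ).kthLargest_eigenvalues_eq_zero_of_rank_le (hrank ℓ)
        (not_lt.mp hk)]
  have hbar_psd : (∑ ℓ, (w ℓ : 𝕜) • Γ ℓ).PosSemidef :=
    posSemidef_sum _ fun ℓ _ => (hpsd ℓ).smul (RCLike.ofReal_nonneg.mpr (hw ℓ))
  have ht_le : ∀ k ∈ univ, t k ≤ kthLargest hbar.eigenvalues k := fun k _ => by
    by_cases hk : (k : ℕ) < K
    · simp only [t, if_pos hk, le_rfl]
    · simpa only [t, if_neg hk] using kthLargest_nonneg hbar_psd.eigenvalues_nonneg k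
  have hsum_t : ∑ k, t k = ∑ k, kthLargest hbar.eigenvalues k := by
    have htrace : ((∑ k, t k : ℝ) : 𝕜) = (∑ k, kthLargest hbar.eigenvalues k : ℝ) := calc
      _ = ∑ ℓ, (w ℓ : 𝕜) * (Γ ℓ).trace := by
        simp only [(hpsd _).isHermitian.trace_eq_sum_kthLargest, hΓt, ← sum_mul,
          ← RCLike.ofReal_sum, hsum, RCLike.ofReal_one, one_mul]
      _ = _ := by
        rw [RCLike.ofReal_sum, ← hbar.trace_eq_sum_kthLargest, trace_sum]
        simp only [trace_smul, smul_eq_mul]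
    exact_mod_cast htrace
  have ht_eq := (sum_eq_sum_iff_of_le ht_le).mp hsum_t
  exact funext fun k => (congrFun (hΓt ℓ) k).trans (ht_eq k (mem_univ k))

end kthLargest

end Matrix

theorem covariance_equality_iff_eigenvalues_general (M K L : ℕ)
    (Γ : Fin L → Matrix (Fin M) (Fin M) ℂ)
    (hpsd : ∀ ℓ, (Γ ℓ).PosSemidef)
    (hrank : ∀ ℓ, (Γ ℓ).rank ≤ K)
    (w : Fin L → ℝ) (hw : ∀ ℓ, 0 < w ℓ) (hsum : ∑ ℓ, w ℓ = 1)
    (hbar : (∑ ℓ, (w ℓ : ℂ) • Γ ℓ).IsHermitian) :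
    (∀ ℓ ℓ' : Fin L, Γ ℓ = Γ ℓ') ↔
      (∀ k : Fin M, (k : ℕ) < K → ∀ ℓ : Fin L,
        kthLargest ((hpsd ℓ).isHermitian.eigenvalues) k = kthLargest hbar.eigenvalues k) := by
  constructor
  · intro heq k _ ℓ
    have hmean : ∑ ℓ', (w ℓ' : ℂ) • Γ ℓ' = Γ ℓ := by
      simp only [heq _ ℓ, ← sum_smul, ← Complex.ofReal_sum, hsum, Complex.ofReal_one, one_smul]
    revert hbar
    rw [hmean]
    exact fun _ => rfl
  · intro h ℓ ℓ'
    have hsorted :=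
      kthLargest_eigenvalues_eq_of_rank_le hpsd hrank w (fun ℓ => (hw ℓ).le) hsum hbar h
    have hmean := eq_sum_smul_of_trace_conjTranspose_mul_self_eq Γ w hw hsum fun ℓ =>
      (hpsd ℓ).isHermitian.trace_conjTranspose_mul_self_eq_of_kthLargest_eq hbar (hsorted ℓ)
    rw [hmean ℓ, hmean ℓ']

/-- for PSD Hermitian matrices `Γ₁, …, Γ_L` of rank at most `K ≤ M` and
positive weights summing to one, with `Γ = Σ w_ℓ Γ_ℓ`, one has `Γ₁ = ⋯ = Γ_L` iff for all
`k ∈ {1, …, K}` and all `ℓ`, the `k`-th largest eigenvalue of `Γ_ℓ` equals the `k`-th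
largest eigenvalue of `Γ`. -/
theorem covariance_equality_iff_eigenvalues (M K L : ℕ) (hM : 0 < M) (hK : 0 < K)
    (hL : 0 < L) (hKM : K ≤ M)
    (Γ : Fin L → Matrix (Fin M) (Fin M) ℂ)
    (hpsd : ∀ ℓ, (Γ ℓ).PosSemidef)
    (hrank : ∀ ℓ, (Γ ℓ).rank ≤ K)
    (w : Fin L → ℝ) (hw : ∀ ℓ, 0 < w ℓ) (hsum : ∑ ℓ, w ℓ = 1)
    (hbar : (∑ ℓ, (w ℓ : ℂ) • Γ ℓ).IsHermitian) :
    (∀ ℓ ℓ' : Fin L, Γ ℓ = Γ ℓ') ↔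
      (∀ k : Fin M, (k : ℕ) < K → ∀ ℓ : Fin L,
        kthLargest ((hpsd ℓ).isHermitian.eigenvalues) k = kthLargest hbar.eigenvalues k) :=
  covariance_equality_iff_eigenvalues_general M K L Γ hpsd hrank w hw hsum hbar
end

section
/- Let σ² > 0 and c > 0, and define φ(v) = v(1 − σ²c/(σ² − v)) for real v ≠ σ², w⁻ = σ²(1 − √c), w⁺ = σ²(1 + √c), x⁻ = σ²(1 − √c)², x⁺ = σ²(1 + √c)². Then φ is strictly increasing on (−∞, w⁻) and on (w⁺, +∞), strictly decreasing on (w⁻, σ²) and on (σ², w⁺), and φ(w⁻) = x⁻ and φ(w⁺) = x⁺. -/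
/-!
With `s = σ²`, writing `φ(v) = v + sc - s²c/(s - v)` gives the secant identity
`φ(w) - φ(v) = (w - v)(1 - s²c/((s - v)(s - w)))`. Hence `φ` is increasing on an interval on which
`(s - v)(s - w) > s²c = (s√c)²` for all pairs of points, and decreasing on one where that product
lies in `(0, s²c)`; that is, according as `|s - v|` stays above or below `s√c`.
-/

open Set

namespace MarcenkoPastur

noncomputable def phi (s c v : ℝ) : ℝ := v * (1 - s * c / (s - v))

variable {s c : ℝ}

theorem phi_sub_phi {v w : ℝ} (hv : v ≠ s) (hw : w ≠ s) :
    phi s c v - phi s c w = (v - w) * (1 - s ^ 2 * c / ((s - v) * (s - w))) := by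
  have hv' : s - v ≠ 0 := sub_ne_zero.mpr hv.symm
  have hw' : s - w ≠ 0 := sub_ne_zero.mpr hw.symm
  unfold phi
  field_simp
  ring

theorem strictMonoOn_phi {S : Set ℝ}
    (h : ∀ v ∈ S, ∀ w ∈ S, 0 < (s - v) * (s - w) ∧ s ^ 2 * c < (s - v) * (s - w)) :
    StrictMonoOn (phi s c) S := by
  intro v hv w hw hvw
  obtain ⟨hpos, hlt⟩ := h w hw v hv
  have hws : w ≠ s := by rintro rfl; simp at hpos
  have hvs : v ≠ s := by rintro rfl; simp at hpos
  have hfrac : s ^ 2 * c / ((s - w) * (s - v)) < 1 := (div_lt_one hpos).mpr hlt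
  rw [← sub_pos, phi_sub_phi hws hvs]
  exact mul_pos (sub_pos.mpr hvw) (sub_pos.mpr hfrac)

theorem strictAntiOn_phi {S : Set ℝ}
    (h : ∀ v ∈ S, ∀ w ∈ S, 0 < (s - v) * (s - w) ∧ (s - v) * (s - w) < s ^ 2 * c) :
    StrictAntiOn (phi s c) S := by
  intro v hv w hw hvw
  obtain ⟨hpos, hlt⟩ := h w hw v hv
  have hws : w ≠ s := by rintro rfl; simp at hpos
  have hvs : v ≠ s := by rintro rfl; simp at hpos
  have hfrac : 1 < s ^ 2 * c / ((s - w) * (s - v)) := (one_lt_div hpos).mpr hlt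
  rw [← sub_neg, phi_sub_phi hws hvs]
  exact mul_neg_of_pos_of_neg (sub_pos.mpr hvw) (sub_neg.mpr hfrac)

theorem sq_mul_sqrt (hc : 0 ≤ c) : (s * √c) ^ 2 = s ^ 2 * c := by
  rw [mul_pow, Real.sq_sqrt hc]

theorem strictMonoOn_phi_Iio (hs : 0 ≤ s) (hc : 0 ≤ c) :
    StrictMonoOn (phi s c) (Iio (s * (1 - √c))) := by
  refine strictMonoOn_phi fun v hv w hw => ?_
  have ht : 0 ≤ s * √c := by positivity
  have := mul_lt_mul'' (show s * √c < s - v by linarith [hv.out])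
    (show s * √c < s - w by linarith [hw.out]) ht ht
  constructor <;> nlinarith [sq_mul_sqrt (s := s) hc]

theorem strictMonoOn_phi_Ioi (hs : 0 ≤ s) (hc : 0 ≤ c) :
    StrictMonoOn (phi s c) (Ioi (s * (1 + √c))) := by
  refine strictMonoOn_phi fun v hv w hw => ?_
  have ht : 0 ≤ s * √c := by positivity
  have := mul_lt_mul'' (show s * √c < v - s by linarith [hv.out])
    (show s * √c < w - s by linarith [hw.out]) ht ht
  constructor <;> nlinarith [sq_mul_sqrt (s := s) hc]

theorem strictAntiOn_phi_Ioo_left (hc : 0 ≤ c) :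
    StrictAntiOn (phi s c) (Ioo (s * (1 - √c)) s) := by
  refine strictAntiOn_phi fun v hv w hw => ?_
  have hv0 : 0 < s - v := by linarith [hv.2]
  have hw0 : 0 < s - w := by linarith [hw.2]
  have := mul_lt_mul'' (show s - v < s * √c by linarith [hv.1])
    (show s - w < s * √c by linarith [hw.1]) hv0.le hw0.le
  exact ⟨mul_pos hv0 hw0, by nlinarith [sq_mul_sqrt (s := s) hc]⟩

theorem strictAntiOn_phi_Ioo_right (hc : 0 ≤ c) :
    StrictAntiOn (phi s c) (Ioo s (s * (1 + √c))) := by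
  refine strictAntiOn_phi fun v hv w hw => ?_
  have hv0 : 0 < v - s := by linarith [hv.1]
  have hw0 : 0 < w - s := by linarith [hw.1]
  have := mul_lt_mul'' (show v - s < s * √c by linarith [hv.2])
    (show w - s < s * √c by linarith [hw.2]) hv0.le hw0.le
  constructor <;> nlinarith [sq_mul_sqrt (s := s) hc]

theorem phi_mul_one_sub_sqrt (hs : s ≠ 0) (hc : 0 < c) :
    phi s c (s * (1 - √c)) = s * (1 - √c) ^ 2 := by
  have hr : √c ≠ 0 := (Real.sqrt_pos.mpr hc).ne'
  have h : s - s * (1 - √c) = s * √c := by ring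
  rw [phi, h]
  field_simp
  linear_combination (1 - √c) * Real.sq_sqrt hc.le

theorem phi_mul_one_add_sqrt (hs : s ≠ 0) (hc : 0 < c) :
    phi s c (s * (1 + √c)) = s * (1 + √c) ^ 2 := by
  have hr : √c ≠ 0 := (Real.sqrt_pos.mpr hc).ne'
  have h : s - s * (1 + √c) = -(s * √c) := by ring
  rw [phi, h]
  field_simp
  linear_combination -Real.sq_sqrt hc.le

end MarcenkoPastur

/-- the function `φ(v) = v(1 − σ²c/(σ² − v))` is strictly increasing on
`(−∞, w⁻)` and on `(w⁺, +∞)`, strictly decreasing on `(w⁻, σ²)` and on `(σ², w⁺)`,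
where `w∓ = σ²(1 ∓ √c)`, and `φ(w⁻) = x⁻ = σ²(1 − √c)²`, `φ(w⁺) = x⁺ = σ²(1 + √c)²`. -/
theorem phi_monotonicity (s c : ℝ) (hs : 0 < s) (hc : 0 < c) :
    StrictMonoOn (fun v : ℝ => v * (1 - s * c / (s - v))) (Set.Iio (s * (1 - Real.sqrt c))) ∧
    StrictMonoOn (fun v : ℝ => v * (1 - s * c / (s - v))) (Set.Ioi (s * (1 + Real.sqrt c))) ∧
    StrictAntiOn (fun v : ℝ => v * (1 - s * c / (s - v))) (Set.Ioo (s * (1 - Real.sqrt c)) s) ∧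
    StrictAntiOn (fun v : ℝ => v * (1 - s * c / (s - v))) (Set.Ioo s (s * (1 + Real.sqrt c))) ∧
    (s * (1 - Real.sqrt c)) * (1 - s * c / (s - s * (1 - Real.sqrt c)))
      = s * (1 - Real.sqrt c) ^ 2 ∧
    (s * (1 + Real.sqrt c)) * (1 - s * c / (s - s * (1 + Real.sqrt c)))
      = s * (1 + Real.sqrt c) ^ 2 := by
  open MarcenkoPastur in
  exact ⟨strictMonoOn_phi_Iio hs.le hc.le, strictMonoOn_phi_Ioi hs.le hc.le,
    strictAntiOn_phi_Ioo_left hc.le, strictAntiOn_phi_Ioo_right hc.le,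
    phi_mul_one_sub_sqrt hs.ne' hc, phi_mul_one_add_sqrt hs.ne' hc⟩
end

section
/- Let σ² > 0 and c > 0, set x⁻ = σ²(1 − √c)² and x⁺ = σ²(1 + √c)², let m be the Marcenko–Pastur Stieltjes transform with parameters (σ², c), and define w(x) = x(1 + σ²c·m(x)) and φ(v) = v(1 − σ²c/(σ² − v)) for v ≠ σ². Then for every real x with x ∉ [x⁻, x⁺] and x ≠ 0: w(x) is real, w(x) ≠ σ², φ(w(x)) = x, the derivative φ′(w(x)) = 1 − σ⁴c/(σ² − w(x))² is strictly positive, and w(x) is the unique real number v ≠ σ² satisfying both φ(v) = x and φ′(v) > 0. -/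
/-- The Marcenko–Pastur Stieltjes transform with parameters `(σ² = s, c)`. -/
noncomputable def mpStieltjes (s c : ℝ) (z : ℂ) : ℂ :=
  (∫ l in (s * (1 - Real.sqrt c) ^ 2)..(s * (1 + Real.sqrt c) ^ 2),
      (↑(Real.sqrt ((l - s * (1 - Real.sqrt c) ^ 2) * (s * (1 + Real.sqrt c) ^ 2 - l)) /
          (2 * Real.pi * s * c * l)) : ℂ) * (1 / ((l : ℂ) - z)))
    - (↑(max (1 - 1 / c) 0) : ℂ) / z

/-- `w(z) = z(1 + σ²c·m(z))`. -/
noncomputable def mpW (s c : ℝ) (z : ℂ) : ℂ :=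
  z * (1 + (s : ℂ) * (c : ℂ) * mpStieltjes s c z)

/-!
For real `x` off the support the Stieltjes integral is elementary. The partial fraction
`1 / (l (l - x)) = (1 / (l - x) - 1 / l) / x` reduces it to two integrals
`∫ √((l - x⁻)(x⁺ - l)) / (l - t) dl = π ((x⁻ + x⁺) / 2 - t - e)`, where `e` is the branch of
`√((t - x⁻)(t - x⁺))` with the sign of `x⁻ - t`; these follow from an explicit arcsine primitive.
Hence `w(x) = (x + σ² - σ²c - e) / 2`. In the variable `p = σ² - v` the equation `φ(v) = x` is the
quadratic `p² - (σ² + σ²c - x) p + σ⁴c = 0`, whose two roots have product `σ⁴c`; so at most one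
root has `p² > σ⁴c`, i.e. `φ′(v) > 0`, and the sign of `e` makes `w(x)` that root.
-/

open Real Set MeasureTheory intervalIntegral

namespace MarcenkoPastur

section Primitive

noncomputable def sqrtProd (a b l : ℝ) : ℝ := √((l - a) * (b - l))

noncomputable def stieltjesPrimitive (a b t e y : ℝ) : ℝ :=
  sqrtProd a b y + ((a + b) / 2 - t) * arcsin ((2 * y - (a + b)) / (b - a))
    + e * arcsin ((2 * a * b + 2 * t * y - (a + b) * (y + t)) / ((b - a) * (y - t)))

variable {a b t e l : ℝ}

lemma continuous_sqrtProd : Continuous (sqrtProd a b) := by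
  unfold sqrtProd; fun_prop

lemma sqrtProd_left : sqrtProd a b a = 0 := by simp [sqrtProd]

lemma sqrtProd_right : sqrtProd a b b = 0 := by simp [sqrtProd]

lemma sq_sqrtProd (hl : l ∈ Ioo a b) : sqrtProd a b l ^ 2 = (l - a) * (b - l) :=
  sq_sqrt (mul_nonneg (sub_nonneg.2 hl.1.le) (sub_nonneg.2 hl.2.le))

lemma sqrtProd_pos (hl : l ∈ Ioo a b) : 0 < sqrtProd a b l :=
  sqrt_pos.2 (mul_pos (sub_pos.2 hl.1) (sub_pos.2 hl.2))

lemma hasDerivAt_sqrtProd (hl : l ∈ Ioo a b) :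
    HasDerivAt (sqrtProd a b) ((a + b - 2 * l) / (2 * sqrtProd a b l)) l := by
  have h := ((hasDerivAt_id' l).sub_const a).mul ((hasDerivAt_const l b).sub (hasDerivAt_id' l))
  refine (h.sqrt (mul_pos (sub_pos.2 hl.1) (sub_pos.2 hl.2)).ne').congr_deriv ?_
  simp only [Pi.mul_apply, Pi.sub_apply, sqrtProd]
  ring

lemma hasDerivAt_arcsin_affine (hl : l ∈ Ioo a b) :
    HasDerivAt (fun y => arcsin ((2 * y - (a + b)) / (b - a))) (1 / sqrtProd a b l) l := by
  have hba : 0 < b - a := sub_pos.2 (hl.1.trans hl.2)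
  have hS := sqrtProd_pos hl
  have h1 : √(1 - ((2 * l - (a + b)) / (b - a)) ^ 2) = 2 * sqrtProd a b l / (b - a) := by
    rw [sqrt_eq_iff_mul_self_eq_of_pos (by positivity)]
    field_simp
    linear_combination 4 * sq_sqrtProd hl
  have h := (hasDerivAt_arcsin
    (by rw [ne_eq, div_eq_iff hba.ne']; linarith [hl.1, hl.2])
    (by rw [ne_eq, div_eq_one_iff_eq hba.ne']; linarith [hl.1, hl.2])).comp l
    ((((hasDerivAt_id' l).const_mul 2).sub_const (a + b)).div_const (b - a))
  refine h.congr_deriv ?_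
  rw [h1]
  field_simp

lemma sub_ne_zero_of_sq_eq (hl : l ∈ Ioo a b) (he : e ^ 2 = (t - a) * (t - b)) : l - t ≠ 0 := by
  intro h
  obtain rfl : l = t := by linarith
  nlinarith [hl.1, hl.2, sq_nonneg e]

lemma hasDerivAt_mul_arcsin_moebius (hl : l ∈ Ioo a b) (he : e ^ 2 = (t - a) * (t - b))
    (hsign : 0 ≤ e * (l - t)) :
    HasDerivAt
      (fun y => e * arcsin ((2 * a * b + 2 * t * y - (a + b) * (y + t)) / ((b - a) * (y - t))))
      (-e ^ 2 / ((l - t) * sqrtProd a b l)) l := by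
  rcases eq_or_ne e 0 with rfl | he0
  · simpa using hasDerivAt_const l (0 : ℝ)
  have hba : 0 < b - a := sub_pos.2 (hl.1.trans hl.2)
  have hlt := sub_ne_zero_of_sq_eq hl he
  have hpos : 0 < e * (l - t) := hsign.lt_of_ne (mul_ne_zero he0 hlt).symm
  have hS := sqrtProd_pos hl
  have hg : HasDerivAt (fun y => (2 * a * b + 2 * t * y - (a + b) * (y + t)) / ((b - a) * (y - t)))
      (-2 * e ^ 2 / ((b - a) * (l - t) ^ 2)) l := by
    have hnum := ((hasDerivAt_const l (2 * a * b)).add ((hasDerivAt_id' l).const_mul (2 * t))).sub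
      (((hasDerivAt_id' l).add_const t).const_mul (a + b))
    refine (hnum.div (((hasDerivAt_id' l).sub_const t).const_mul (b - a))
      (mul_ne_zero hba.ne' hlt)).congr_deriv ?_
    simp only [Pi.add_apply, Pi.sub_apply]
    rw [he]
    field_simp
    ring
  have hsq : 1 - ((2 * a * b + 2 * t * l - (a + b) * (l + t)) / ((b - a) * (l - t))) ^ 2
      = (2 * e * sqrtProd a b l / ((b - a) * (l - t))) ^ 2 := by
    rw [div_pow, div_pow, mul_pow, mul_pow, mul_pow, he, sq_sqrtProd hl]
    field_simp
    ring
  have hpos' : 0 < 2 * e * sqrtProd a b l / ((b - a) * (l - t)) := by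
    rw [show 2 * e * sqrtProd a b l / ((b - a) * (l - t))
      = 2 * sqrtProd a b l * (e * (l - t)) / ((b - a) * (l - t) ^ 2) by field_simp]
    positivity
  have hg1 : ((2 * a * b + 2 * t * l - (a + b) * (l + t)) / ((b - a) * (l - t))) ^ 2 < 1 := by
    nlinarith
  have h := ((hasDerivAt_arcsin (by nlinarith) (by nlinarith)).comp l hg).const_mul e
  refine h.congr_deriv ?_
  rw [hsq, sqrt_sq hpos'.le]
  field_simp

lemma hasDerivAt_stieltjesPrimitive (hl : l ∈ Ioo a b) (he : e ^ 2 = (t - a) * (t - b))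
    (hsign : 0 ≤ e * (l - t)) :
    HasDerivAt (stieltjesPrimitive a b t e) (sqrtProd a b l / (l - t)) l := by
  have hlt := sub_ne_zero_of_sq_eq hl he
  have hS := sqrtProd_pos hl
  refine (((hasDerivAt_sqrtProd hl).add ((hasDerivAt_arcsin_affine hl).const_mul _)).add
    (hasDerivAt_mul_arcsin_moebius hl he hsign)).congr_deriv ?_
  field_simp
  linear_combination (-2) * he - 2 * sq_sqrtProd hl

lemma continuousOn_stieltjesPrimitive (hab : a < b) (he : e ^ 2 = (t - a) * (t - b)) :
    ContinuousOn (stieltjesPrimitive a b t e) (Icc a b) := by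
  refine ContinuousOn.add (Continuous.continuousOn ?_) ?_
  · exact continuous_sqrtProd.add (continuous_const.mul (continuous_arcsin.comp (by fun_prop)))
  rcases eq_or_ne e 0 with rfl | he0
  · simpa using continuousOn_const
  have hq : 0 < (t - a) * (t - b) := by rw [← he]; positivity
  have hne : ∀ y ∈ Icc a b, (b - a) * (y - t) ≠ 0 := by
    rintro y ⟨hay, hyb⟩ h
    rcases mul_eq_zero.1 h with h | h <;> nlinarith
  exact continuousOn_const.mul
    (continuous_arcsin.comp_continuousOn ((by fun_prop : Continuous _).continuousOn.div
      (by fun_prop : Continuous _).continuousOn hne))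

lemma stieltjesPrimitive_right_sub_left (hab : a < b) (he : e ^ 2 = (t - a) * (t - b)) :
    stieltjesPrimitive a b t e b - stieltjesPrimitive a b t e a = π * ((a + b) / 2 - t - e) := by
  have hba : b - a ≠ 0 := (sub_pos.2 hab).ne'
  have hb : (2 * b - (a + b)) / (b - a) = 1 := by rw [div_eq_one_iff_eq hba]; ring
  have ha : (2 * a - (a + b)) / (b - a) = -1 := by rw [div_eq_iff hba]; ring
  simp only [stieltjesPrimitive, sqrtProd_left, sqrtProd_right, hb, ha, arcsin_one, arcsin_neg_one]
  rcases eq_or_ne e 0 with rfl | he0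
  · ring
  have hq : 0 < (t - a) * (t - b) := by rw [← he]; positivity
  have hgb : (2 * a * b + 2 * t * b - (a + b) * (b + t)) / ((b - a) * (b - t)) = -1 := by
    rw [div_eq_iff (mul_ne_zero hba (sub_ne_zero.2 (by rintro rfl; simp at hq)))]; ring
  have hga : (2 * a * b + 2 * t * a - (a + b) * (a + t)) / ((b - a) * (a - t)) = 1 := by
    rw [div_eq_one_iff_eq (mul_ne_zero hba (sub_ne_zero.2 (by rintro rfl; simp at hq)))]; ring
  rw [hgb, hga, arcsin_one, arcsin_neg_one]
  ring

lemma intervalIntegrable_sqrtProd_div_sub (hab : a < b) (ht : t ≤ a ∨ b < t) :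
    IntervalIntegrable (fun l => sqrtProd a b l / (l - t)) volume a b := by
  rcases ht with ht | ht
  · have he : √((t - a) * (t - b)) ^ 2 = (t - a) * (t - b) := sq_sqrt (by nlinarith)
    refine intervalIntegrable_deriv_of_nonneg
      (g := stieltjesPrimitive a b t √((t - a) * (t - b))) ?_ ?_ ?_ <;>
      simp only [uIcc_of_le hab.le, min_eq_left hab.le, max_eq_right hab.le]
    · exact continuousOn_stieltjesPrimitive hab he
    · exact fun l hl => hasDerivAt_stieltjesPrimitive hl he
        (mul_nonneg (sqrt_nonneg _) (by linarith [hl.1]))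
    · exact fun l hl => div_nonneg (sqrt_nonneg _) (by linarith [hl.1])
  · refine (continuous_sqrtProd.continuousOn.div (by fun_prop) fun l hl => ?_).intervalIntegrable
    rw [uIcc_of_le hab.le] at hl
    exact sub_ne_zero.2 (hl.2.trans_lt ht).ne

theorem integral_sqrtProd_div_sub (hab : a < b) (he : e ^ 2 = (t - a) * (t - b))
    (hsign : t ≤ a ∧ 0 ≤ e ∨ b < t ∧ e ≤ 0) :
    ∫ l in a..b, sqrtProd a b l / (l - t) = π * ((a + b) / 2 - t - e) := by
  have hderiv : ∀ l ∈ Ioo a b,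
      HasDerivAt (stieltjesPrimitive a b t e) (sqrtProd a b l / (l - t)) l := by
    intro l hl
    refine hasDerivAt_stieltjesPrimitive hl he ?_
    rcases hsign with ⟨ht, he⟩ | ⟨ht, he⟩
    · exact mul_nonneg he (by linarith [hl.1])
    · exact mul_nonneg_of_nonpos_of_nonpos he (by linarith [hl.2])
  rw [integral_eq_sub_of_hasDerivAt_of_le hab.le (continuousOn_stieltjesPrimitive hab he) hderiv
    (intervalIntegrable_sqrtProd_div_sub hab (hsign.imp And.left And.left)),
    stieltjesPrimitive_right_sub_left hab he]

end Primitive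

section Stieltjes

variable {s c x e : ℝ}

lemma mpEdges_lt (hs : 0 < s) (hc : 0 < c) : s * (1 - √c) ^ 2 < s * (1 + √c) ^ 2 := by
  have := sqrt_pos.2 hc
  nlinarith

lemma mpStieltjes_ofReal (hs : 0 < s) (hc : 0 < c) (hx0 : x ≠ 0)
    (he : e ^ 2 = (x - s * (1 - √c) ^ 2) * (x - s * (1 + √c) ^ 2))
    (hsign : x ≤ s * (1 - √c) ^ 2 ∧ 0 ≤ e ∨ s * (1 + √c) ^ 2 < x ∧ e ≤ 0) :
    mpStieltjes s c x = ((s * |1 - c| - x - e) / (2 * s * c * x) - max (1 - 1 / c) 0 / x : ℝ) := by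
  have hab := mpEdges_lt hs hc
  rw [mpStieltjes]
  set a := s * (1 - √c) ^ 2
  set b := s * (1 + √c) ^ 2
  have ha : 0 ≤ a := by positivity
  have hx : x ≤ a ∨ b < x := hsign.imp And.left And.left
  have hpf : EqOn (fun l => √((l - a) * (b - l)) / (2 * π * s * c * l) * (1 / (l - x)))
      (fun l => (sqrtProd a b l / (l - x) - sqrtProd a b l / (l - 0)) / (2 * π * s * c * x))
      (uIcc a b) := by
    intro l hl
    rw [uIcc_of_le hab.le] at hl
    -- both sides vanish at the endpoints; this covers `l = 0` when `c = 1` (density `0 / 0`)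
    rcases hl.1.eq_or_lt with rfl | hal
    · simp [sqrtProd]
    rcases hl.2.eq_or_lt with rfl | hlb
    · simp [sqrtProd]
    have hl0 : l ≠ 0 := (ha.trans_lt hal).ne'
    have hlx : l - x ≠ 0 := by
      rcases hx with hx | hx <;> intro h <;> linarith
    simp only [sqrtProd]
    field_simp
    ring
  have hK0 : (s * |1 - c|) ^ 2 = (0 - a) * (0 - b) := by
    rw [mul_pow, sq_abs]
    linear_combination (s ^ 2 * (2 - c - √c ^ 2)) * sq_sqrt hc.le
  have hreal : EqOn
      (fun l : ℝ => (↑(√((l - a) * (b - l)) / (2 * π * s * c * l)) : ℂ) * (1 / ((l : ℂ) - x)))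
      (fun l => ↑((sqrtProd a b l / (l - x) - sqrtProd a b l / (l - 0)) / (2 * π * s * c * x)))
      (uIcc a b) := by
    intro l hl
    have h := hpf hl
    dsimp only at h ⊢
    rw [← h]
    push_cast
    ring
  rw [integral_congr hreal, intervalIntegral.integral_ofReal, intervalIntegral.integral_div,
    integral_sub (intervalIntegrable_sqrtProd_div_sub hab hx)
      (intervalIntegrable_sqrtProd_div_sub hab (Or.inl ha)),
    integral_sqrtProd_div_sub hab he hsign,
    integral_sqrtProd_div_sub hab hK0 (Or.inl ⟨ha, by positivity⟩)]
  push_cast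
  field_simp
  ring

theorem mpW_ofReal (hs : 0 < s) (hc : 0 < c) (hx0 : x ≠ 0)
    (he : e ^ 2 = (x - s * (1 - √c) ^ 2) * (x - s * (1 + √c) ^ 2))
    (hsign : x ≤ s * (1 - √c) ^ 2 ∧ 0 ≤ e ∨ s * (1 + √c) ^ 2 < x ∧ e ≤ 0) :
    mpW s c x = ((x + s - s * c - e) / 2 : ℝ) := by
  rw [mpW, mpStieltjes_ofReal hs hc hx0 he hsign]
  norm_cast
  rcases le_total c 1 with hc1 | hc1
  · rw [abs_of_nonneg (sub_nonneg.2 hc1),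
      max_eq_right (by rw [sub_nonpos, le_div_iff₀ hc]; linarith)]
    field_simp
    ring
  · rw [abs_of_nonpos (sub_nonpos.2 hc1),
      max_eq_left (by rw [sub_nonneg, div_le_one hc]; linarith)]
    field_simp
    ring

end Stieltjes

section Phi

variable {s c x e v : ℝ}

lemma mpPhi_eq_iff (hv : v ≠ s) :
    v * (1 - s * c / (s - v)) = x ↔ (s - v) ^ 2 - (s + s * c - x) * (s - v) + s ^ 2 * c = 0 := by
  have hsv : s - v ≠ 0 := sub_ne_zero.2 hv.symm
  rw [← sub_eq_zero, show v * (1 - s * c / (s - v)) - x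
      = -((s - v) ^ 2 - (s + s * c - x) * (s - v) + s ^ 2 * c) / (s - v) by field_simp; ring,
    div_eq_zero_iff, neg_eq_zero, or_iff_left hsv]

lemma hasDerivAt_mpPhi (hv : v ≠ s) :
    HasDerivAt (fun v => v * (1 - s * c / (s - v))) (1 - s ^ 2 * c / (s - v) ^ 2) v := by
  have hsv : s - v ≠ 0 := sub_ne_zero.2 hv.symm
  refine ((hasDerivAt_id' v).mul ((hasDerivAt_const v 1).sub ((hasDerivAt_const v (s * c)).div
    ((hasDerivAt_const v s).sub (hasDerivAt_id' v)) hsv))).congr_deriv ?_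
  simp only [Pi.sub_apply, Pi.div_apply]
  field_simp
  ring

lemma one_sub_div_sq_pos_iff {k y : ℝ} (hy : y ≠ 0) : 0 < 1 - k / y ^ 2 ↔ k < y ^ 2 := by
  rw [sub_pos, div_lt_one (by positivity)]

lemma eq_of_quadratic_eq_zero_of_lt_sq {p q u k : ℝ} (hk : 0 ≤ k) (hp : p ^ 2 - u * p + k = 0)
    (hq : q ^ 2 - u * q + k = 0) (hpk : k < p ^ 2) (hqk : k < q ^ 2) : p = q := by
  by_contra hne
  have hsum : p + q = u := mul_left_cancel₀ (sub_ne_zero.2 hne) (by linear_combination hp - hq)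
  have hprod : p * q = k := by linear_combination p * hsum - hp
  nlinarith [mul_lt_mul'' hpk hqk hk hk]

lemma mpPhi_quadratic_of_sq_eq (hc : 0 < c)
    (he : e ^ 2 = (x - s * (1 - √c) ^ 2) * (x - s * (1 + √c) ^ 2)) :
    (s - (x + s - s * c - e) / 2) ^ 2 - (s + s * c - x) * (s - (x + s - s * c - e) / 2)
      + s ^ 2 * c = 0 := by
  linear_combination he / 4 + (-(s * x) / 2 - s ^ 2 / 2 + s ^ 2 * (√c ^ 2 + c) / 4) * sq_sqrt hc.le

lemma lt_sq_sub_of_sign (hs : 0 < s) (hc : 0 < c)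
    (hsign : x < s * (1 - √c) ^ 2 ∧ 0 ≤ e ∨ s * (1 + √c) ^ 2 < x ∧ e ≤ 0) :
    s ^ 2 * c < (s - (x + s - s * c - e) / 2) ^ 2 := by
  have hc' := sq_sqrt hc.le
  rw [show s ^ 2 * c = (s * √c) ^ 2 by rw [mul_pow, hc'], sq_lt_sq,
    abs_of_pos (by positivity), lt_abs]
  have ha : s * (1 - √c) ^ 2 = s + s * c - 2 * (s * √c) := by linear_combination s * hc'
  have hb : s * (1 + √c) ^ 2 = s + s * c + 2 * (s * √c) := by linear_combination s * hc'
  rcases hsign with ⟨hx, he⟩ | ⟨hx, he⟩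
  · left; linarith
  · right; linarith

end Phi

end MarcenkoPastur

open MarcenkoPastur

/-- for every real `x ∉ [x⁻, x⁺]` with `x ≠ 0`: `w(x)` is real (say `w(x) = wr`),
`w(x) ≠ σ²`, `φ(wr) = x` where `φ(v) = v(1 − σ²c/(σ² − v))`, the derivative
`φ′(wr) = 1 − σ⁴c/(σ² − wr)²` is strictly positive, and `wr` is the unique real `v ≠ σ²`
satisfying both `φ(v) = x` and `φ′(v) > 0`. -/
theorem mpW_real_point (s c : ℝ) (hs : 0 < s) (hc : 0 < c) (x : ℝ)
    (hx : (x < s * (1 - Real.sqrt c) ^ 2 ∨ s * (1 + Real.sqrt c) ^ 2 < x) ∧ x ≠ 0) :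
    ∃ wr : ℝ, mpW s c (x : ℂ) = (wr : ℂ) ∧
      wr ≠ s ∧
      wr * (1 - s * c / (s - wr)) = x ∧
      HasDerivAt (fun v : ℝ => v * (1 - s * c / (s - v))) (1 - s ^ 2 * c / (s - wr) ^ 2) wr ∧
      0 < 1 - s ^ 2 * c / (s - wr) ^ 2 ∧
      ∀ v : ℝ, v ≠ s → v * (1 - s * c / (s - v)) = x →
        0 < 1 - s ^ 2 * c / (s - v) ^ 2 → v = wr := by
  obtain ⟨hxout, hx0⟩ := hx
  have hab := mpEdges_lt hs hc
  obtain ⟨e, he, hsign⟩ : ∃ e, e ^ 2 = (x - s * (1 - √c) ^ 2) * (x - s * (1 + √c) ^ 2) ∧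
      (x < s * (1 - √c) ^ 2 ∧ 0 ≤ e ∨ s * (1 + √c) ^ 2 < x ∧ e ≤ 0) := by
    rcases hxout with hx | hx
    · exact ⟨_, sq_sqrt (by nlinarith), Or.inl ⟨hx, sqrt_nonneg _⟩⟩
    · exact ⟨_, (neg_sq _).trans (sq_sqrt (by nlinarith)),
        Or.inr ⟨hx, neg_nonpos.2 (sqrt_nonneg _)⟩⟩
  have hbranch := lt_sq_sub_of_sign hs hc hsign
  have hroot := mpPhi_quadratic_of_sq_eq hc he
  set w := (x + s - s * c - e) / 2
  have hws : w ≠ s := by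
    rintro hws
    rw [hws, sub_self] at hbranch
    nlinarith
  refine ⟨w, mpW_ofReal hs hc hx0 he (hsign.imp_left (And.imp_left le_of_lt)), hws,
    (mpPhi_eq_iff hws).2 hroot, hasDerivAt_mpPhi hws,
    (one_sub_div_sq_pos_iff (sub_ne_zero.2 hws.symm)).2 hbranch, fun v hv hφ hφ' => ?_⟩
  have hvw := eq_of_quadratic_eq_zero_of_lt_sq (by positivity) ((mpPhi_eq_iff hv).1 hφ) hroot
    ((one_sub_div_sq_pos_iff (sub_ne_zero.2 hv.symm)).1 hφ') hbranch
  linarith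
end

section
/- Let σ² > 0, c > 0 and γ > σ²√c, let m be the Marcenko–Pastur Stieltjes transform with parameters (σ², c), and set x_γ = (γ + σ²)(γ + σ²c)/γ. Then the real function x ↦ m(x) is differentiable at x_γ with m′(x_γ) = γ² / ((γ + σ²c)²(γ² − σ⁴c)); the function m̃(x) = −1/(x(1 + σ²c·m(x))) is differentiable at x_γ with m̃′(x_γ) = γ² / ((γ + σ²)²(γ² − σ⁴c)); and the function τ(x) = x·m(x)·m̃(x) is differentiable at x_γ with τ′(x_γ) = −1/(γ² − σ⁴c). -/
/-- `m̃(z) = −1/(z(1 + σ²c·m(z)))`. -/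
noncomputable def mpMtilde (s c : ℝ) (z : ℂ) : ℂ :=
  -1 / (z * (1 + (s : ℂ) * (c : ℂ) * mpStieltjes s c z))

/-- `τ(z) = z·m(z)·m̃(z)`. -/
noncomputable def mpTau (s c : ℝ) (z : ℂ) : ℂ :=
  z * mpStieltjes s c z * mpMtilde s c z

/-!
To the right of the bulk, partial fractions reduce `m` to two Cauchy integrals of the
semicircle `u ↦ √(r² - u²)`, and `∫_{-r}^{r} √(r² - u²)/(p - u) du = π (p - √(p² - r²))` for
`p ≥ r` gives the closed form `m(x) = (σ²(1 - c) - x + √((x - x⁻)(x - x⁺)))/(2σ²cx)`.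
At `x = x_γ` the square root equals `(γ² - σ⁴c)/γ`, so along the curve `γ ↦ x_γ` we get
`m = -1/(γ + σ²c)`, `m̃ = -1/(γ + σ²)` and `τ = 1/γ`. As `dx_γ/dγ = (γ² - σ⁴c)/γ² ≠ 0`, the curve
has a differentiable local inverse, so each derivative at `x_γ` is the `γ`-derivative of these
values divided by `dx_γ/dγ`.
-/

open Real Set Filter Topology MeasureTheory

theorem HasStrictDerivAt.hasDerivAt_of_comp_eventuallyEq {𝕜 F : Type*}
    [NontriviallyNormedField 𝕜] [CompleteSpace 𝕜] [NormedAddCommGroup F] [NormedSpace 𝕜 F]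
    {f g : 𝕜 → F} {φ : 𝕜 → 𝕜}
    {φ' t : 𝕜} {g' : F} (hφ : HasStrictDerivAt φ φ' t) (hφ' : φ' ≠ 0) (hg : HasDerivAt g g' t)
    (hfg : ∀ᶠ u in 𝓝 t, f (φ u) = g u) : HasDerivAt f (φ'⁻¹ • g') (φ t) := by
  set ψ := hφ.localInverse φ φ' t hφ'
  have hψ : HasDerivAt ψ φ'⁻¹ (φ t) := (hφ.to_localInverse hφ').hasDerivAt
  have hψt : ψ (φ t) = t := HasStrictFDerivAt.localInverse_apply_image ..
  have hgψ : HasDerivAt (g ∘ ψ) (φ'⁻¹ • g') (φ t) := by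
    rw [← hψt] at hg
    exact hg.scomp (φ t) hψ
  refine hgψ.congr_of_eventuallyEq ?_
  have hψ_near : ∀ᶠ y in 𝓝 (φ t), f (φ (ψ y)) = g (ψ y) :=
    hψ.continuousAt.tendsto.eventually (hψt.symm ▸ hfg)
  filter_upwards [hψ_near, hφ.eventually_right_inverse hφ'] with y hy hright
  rw [Function.comp_apply, ← hy, hright]

section SemicircleCauchy

variable {r p u : ℝ}

lemma hasDerivAt_mul_arcsin_div_sub_sqrt (hu : u ∈ Ioo (-r) r) :
    HasDerivAt (fun u => p * arcsin (u / r) - √(r ^ 2 - u ^ 2)) ((p + u) / √(r ^ 2 - u ^ 2)) u := by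
  obtain ⟨hu₁, hu₂⟩ := hu
  have hr : 0 < r := by linarith
  have hq : 0 < r ^ 2 - u ^ 2 := by nlinarith
  have hdiv : HasDerivAt (fun u => u / r) (1 / r) u := by simpa using (hasDerivAt_id u).div_const r
  have harcsin := (hasDerivAt_arcsin (x := u / r) (by rw [ne_eq, div_eq_iff hr.ne']; linarith)
    (by rw [ne_eq, div_eq_iff hr.ne']; linarith)).comp u hdiv
  have hsqrt := ((hasDerivAt_pow 2 u).const_sub (r ^ 2)).sqrt hq.ne'
  refine ((harcsin.const_mul p).sub hsqrt).congr_deriv ?_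
  have hsqrt_div : √(1 - (u / r) ^ 2) = √(r ^ 2 - u ^ 2) / r := by
    rw [show 1 - (u / r) ^ 2 = (r ^ 2 - u ^ 2) / r ^ 2 by field_simp, sqrt_div hq.le, sqrt_sq hr.le]
  have := sqrt_pos.2 hq
  rw [hsqrt_div]
  field_simp
  ring

lemma hasDerivAt_sqrt_mul_arcsin (hrp : r ≤ p) (hu : u ∈ Ioo (-r) r) :
    HasDerivAt (fun u => √(p ^ 2 - r ^ 2) * arcsin ((r ^ 2 - p * u) / (r * (p - u))))
      (-(p ^ 2 - r ^ 2) / ((p - u) * √(r ^ 2 - u ^ 2))) u := by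
  obtain ⟨hu₁, hu₂⟩ := hu
  rcases hrp.eq_or_lt with rfl | hrp
  · simpa using hasDerivAt_const u (0 : ℝ)
  have hr : 0 < r := by linarith
  have hq : 0 < r ^ 2 - u ^ 2 := by nlinarith
  have hpu : 0 < p - u := by linarith
  have hw : 0 < p ^ 2 - r ^ 2 := by nlinarith
  have hmoebius : HasDerivAt (fun u => (r ^ 2 - p * u) / (r * (p - u)))
      ((r ^ 2 - p ^ 2) / (r * (p - u) ^ 2)) u := by
    have := (((hasDerivAt_id u).const_mul p).const_sub (r ^ 2)).div
      (((hasDerivAt_id u).const_sub p).const_mul r) (by positivity)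
    refine this.congr_deriv ?_
    simp only [id]
    field_simp
    ring
  have hne : ∀ v, v = 1 ∨ v = -1 → (r ^ 2 - p * u) / (r * (p - u)) ≠ v := by
    rintro v hv h
    rw [div_eq_iff (by positivity)] at h
    rcases hv with rfl | rfl <;> nlinarith
  have harcsin := (hasDerivAt_arcsin (hne _ (.inr rfl)) (hne _ (.inl rfl))).comp u hmoebius
  refine (harcsin.const_mul _).congr_deriv ?_
  have hsqrt : √(1 - ((r ^ 2 - p * u) / (r * (p - u))) ^ 2)
      = √(p ^ 2 - r ^ 2) * √(r ^ 2 - u ^ 2) / (r * (p - u)) := by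
    rw [show 1 - ((r ^ 2 - p * u) / (r * (p - u))) ^ 2
        = (p ^ 2 - r ^ 2) * (r ^ 2 - u ^ 2) / (r * (p - u)) ^ 2 by field_simp; ring,
      sqrt_div (by positivity), sqrt_mul hw.le, sqrt_sq (by positivity)]
  have := sqrt_pos.2 hq
  have := sqrt_pos.2 hw
  rw [hsqrt]
  field_simp
  ring


/-- A primitive of `u ↦ √(r² - u²) / (p - u)` on `[-r, r]`, for `r ≤ p`. -/
noncomputable def semicircleCauchyPrimitive (r p u : ℝ) : ℝ :=
  p * arcsin (u / r) - √(r ^ 2 - u ^ 2)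
    + √(p ^ 2 - r ^ 2) * arcsin ((r ^ 2 - p * u) / (r * (p - u)))

lemma hasDerivAt_semicircleCauchyPrimitive (hrp : r ≤ p) (hu : u ∈ Ioo (-r) r) :
    HasDerivAt (semicircleCauchyPrimitive r p) (√(r ^ 2 - u ^ 2) / (p - u)) u := by
  refine ((hasDerivAt_mul_arcsin_div_sub_sqrt hu).add
    (hasDerivAt_sqrt_mul_arcsin hrp hu)).congr_deriv ?_
  obtain ⟨hu₁, hu₂⟩ := hu
  have hpu : p - u ≠ 0 := by linarith
  have hq : 0 < r ^ 2 - u ^ 2 := by nlinarith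
  have := sqrt_pos.2 hq
  field_simp
  rw [sq_sqrt hq.le]
  ring

lemma continuousOn_semicircleCauchyPrimitive (hr : 0 < r) (hrp : r ≤ p) :
    ContinuousOn (semicircleCauchyPrimitive r p) (Icc (-r) r) := by
  have hmain : ContinuousOn (fun u => p * arcsin (u / r) - √(r ^ 2 - u ^ 2)) (Icc (-r) r) := by
    fun_prop
  rcases hrp.eq_or_lt with rfl | hrp
  · exact hmain.congr fun u _ => by simp [semicircleCauchyPrimitive]
  refine hmain.add (continuousOn_const.mul (continuous_arcsin.comp_continuousOn ?_))
  refine ContinuousOn.div (by fun_prop) (by fun_prop) fun u hu => ?_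
  have : u ≤ r := hu.2
  exact mul_ne_zero hr.ne' (by linarith)

lemma semicircleCauchyPrimitive_sub (hr : 0 < r) (hrp : r ≤ p) :
    semicircleCauchyPrimitive r p r - semicircleCauchyPrimitive r p (-r)
      = π * (p - √(p ^ 2 - r ^ 2)) := by
  rcases hrp.eq_or_lt with rfl | hrp
  · simp [semicircleCauchyPrimitive, hr.ne']
    ring
  have hright : (r ^ 2 - p * r) / (r * (p - r)) = -1 := by
    rw [div_eq_iff (mul_ne_zero hr.ne' (by linarith))]; ring
  have hleft : (r ^ 2 - p * -r) / (r * (p - -r)) = 1 := by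
    rw [div_eq_iff (mul_ne_zero hr.ne' (by linarith))]; ring
  simp only [semicircleCauchyPrimitive]
  rw [hright, hleft]
  simp [hr.ne']
  ring

lemma intervalIntegrable_sqrt_sq_sub_sq_div_sub (hr : 0 < r) (hrp : r ≤ p) :
    IntervalIntegrable (fun u => √(r ^ 2 - u ^ 2) / (p - u)) volume (-r) r := by
  have hle : -r ≤ r := neg_le_self hr.le
  refine intervalIntegral.intervalIntegrable_deriv_of_nonneg (g := semicircleCauchyPrimitive r p)
    ?_ ?_ ?_
  · simpa [uIcc_of_le hle] using continuousOn_semicircleCauchyPrimitive hr hrp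
  · simpa [hle] using fun u hu => hasDerivAt_semicircleCauchyPrimitive hrp hu
  · simp only [min_eq_left hle, max_eq_right hle]
    exact fun u hu => div_nonneg (sqrt_nonneg _) (by linarith [hu.2])

theorem integral_sqrt_sq_sub_sq_div_sub (hr : 0 < r) (hrp : r ≤ p) :
    ∫ u in (-r)..r, √(r ^ 2 - u ^ 2) / (p - u) = π * (p - √(p ^ 2 - r ^ 2)) := by
  rw [intervalIntegral.integral_eq_sub_of_hasDerivAt_of_le (neg_le_self hr.le)
    (continuousOn_semicircleCauchyPrimitive hr hrp)
    (fun u hu => hasDerivAt_semicircleCauchyPrimitive hrp hu)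
    (intervalIntegrable_sqrt_sq_sub_sq_div_sub hr hrp), semicircleCauchyPrimitive_sub hr hrp]

end SemicircleCauchy

section CauchyTransformOfArc

variable {a b k x : ℝ}

lemma sqrt_mul_div_sub_eq (a b x l : ℝ) :
    √((l - a) * (b - l)) / (l - x)
      = -(√(((b - a) / 2) ^ 2 - (l - (a + b) / 2) ^ 2)
          / ((x - (a + b) / 2) - (l - (a + b) / 2))) := by
  rw [show (l - a) * (b - l) = ((b - a) / 2) ^ 2 - (l - (a + b) / 2) ^ 2 by ring, ← div_neg]
  ring_nf

lemma intervalIntegrable_sqrt_mul_div_sub_of_le (hab : a < b) (hx : b ≤ x) :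
    IntervalIntegrable (fun l => √((l - a) * (b - l)) / (l - x)) volume a b := by
  have h := ((intervalIntegrable_sqrt_sq_sub_sq_div_sub (r := (b - a) / 2) (p := x - (a + b) / 2)
    (by linarith) (by linarith)).comp_sub_right ((a + b) / 2)).neg
  rw [show -((b - a) / 2) + (a + b) / 2 = a by ring,
    show (b - a) / 2 + (a + b) / 2 = b by ring] at h
  simp only [sqrt_mul_div_sub_eq a b x]
  exact h

theorem integral_sqrt_mul_div_sub_of_le (hab : a < b) (hx : b ≤ x) :
    ∫ l in a..b, √((l - a) * (b - l)) / (l - x)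
      = π * ((a + b) / 2 - x + √((x - a) * (x - b))) := by
  simp only [sqrt_mul_div_sub_eq a b x]
  rw [intervalIntegral.integral_neg, intervalIntegral.integral_comp_sub_right
    (fun u => √(((b - a) / 2) ^ 2 - u ^ 2) / ((x - (a + b) / 2) - u)),
    show a - (a + b) / 2 = -((b - a) / 2) by ring, show b - (a + b) / 2 = (b - a) / 2 by ring,
    integral_sqrt_sq_sub_sq_div_sub (by linarith) (by linarith),
    show (x - (a + b) / 2) ^ 2 - ((b - a) / 2) ^ 2 = (x - a) * (x - b) by ring]
  ring

lemma sqrt_mul_div_sub_neg_eq (a b x l : ℝ) :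
    √((-l - a) * (b - -l)) / (-l - x) = -(√((l - -b) * (-a - l)) / (l - -x)) := by
  rw [← div_neg]
  ring_nf

lemma intervalIntegrable_sqrt_mul_div_sub_of_ge (hab : a < b) (hx : x ≤ a) :
    IntervalIntegrable (fun l => √((l - a) * (b - l)) / (l - x)) volume a b := by
  rw [IntervalIntegrable.iff_comp_neg]
  simp only [sqrt_mul_div_sub_neg_eq a b x]
  exact (intervalIntegrable_sqrt_mul_div_sub_of_le (neg_lt_neg hab) (neg_le_neg hx)).neg.symm

theorem integral_sqrt_mul_div_sub_of_ge (hab : a < b) (hx : x ≤ a) :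
    ∫ l in a..b, √((l - a) * (b - l)) / (l - x)
      = π * ((a + b) / 2 - x - √((x - a) * (x - b))) := by
  rw [← neg_neg a, ← neg_neg b, ← intervalIntegral.integral_comp_neg]
  simp only [neg_neg, sqrt_mul_div_sub_neg_eq a b x]
  rw [intervalIntegral.integral_neg,
    integral_sqrt_mul_div_sub_of_le (neg_lt_neg hab) (neg_le_neg hx),
    show (-x - -b) * (-x - -a) = (x - a) * (x - b) by ring]
  ring

theorem integral_sqrt_mul_div_mul_mul_one_div_sub (ha : 0 ≤ a) (hab : a < b) (hx : b < x) :
    ∫ l in a..b, √((l - a) * (b - l)) / (k * l) * (1 / (l - x))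
      = π / (k * x) * (√(a * b) + √((x - a) * (x - b)) - x) := by
  rcases eq_or_ne k 0 with rfl | hk
  · simp
  have hx₀ : x ≠ 0 := by linarith
  have hpartial : EqOn (fun l => √((l - a) * (b - l)) / (k * l) * (1 / (l - x)))
      (fun l => (k * x)⁻¹ * (√((l - a) * (b - l)) / (l - x) - √((l - a) * (b - l)) / (l - 0)))
      (uIcc a b) := by
    intro l hl
    rw [uIcc_of_le hab.le] at hl
    have hlx : l - x ≠ 0 := by linarith [hl.2]
    -- `l = 0` forces `a = 0`, and then the square root vanishes on both sides
    rcases eq_or_ne l 0 with rfl | hl₀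
    · simp [le_antisymm hl.1 ha]
    · field_simp
      ring
  rw [intervalIntegral.integral_congr hpartial, intervalIntegral.integral_const_mul,
    intervalIntegral.integral_sub (intervalIntegrable_sqrt_mul_div_sub_of_le hab hx.le)
      (intervalIntegrable_sqrt_mul_div_sub_of_ge hab ha),
    integral_sqrt_mul_div_sub_of_le hab hx.le, integral_sqrt_mul_div_sub_of_ge hab ha,
    show (0 - a) * (0 - b) = a * b by ring]
  field_simp
  ring

end CauchyTransformOfArc

section MarcenkoPastur

variable {x s c γ : ℝ}

lemma sqrt_mul_mp_edges (hs : 0 ≤ s) (hc : 0 ≤ c) :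
    √(s * (1 - √c) ^ 2 * (s * (1 + √c) ^ 2)) = s * |1 - c| := by
  rw [show s * (1 - √c) ^ 2 * (s * (1 + √c) ^ 2) = (s * (1 - √c ^ 2)) ^ 2 by ring,
    sq_sqrt hc, sqrt_sq_eq_abs, abs_mul, abs_of_nonneg hs]

lemma mul_abs_one_sub_eq (hc : 0 < c) :
    s * |1 - c| = s * (1 - c) + 2 * s * (c * max (1 - 1 / c) 0) := by
  rw [mul_max_of_nonneg _ _ hc.le, mul_zero, show c * (1 - 1 / c) = c - 1 by field_simp]
  rcases le_total c 1 with h | h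
  · rw [abs_of_nonneg (by linarith), max_eq_right (by linarith)]; ring
  · rw [abs_of_nonpos (by linarith), max_eq_left (by linarith)]; ring

theorem mpStieltjes_ofReal_of_lt (hs : 0 < s) (hc : 0 < c) (hx : s * (1 + √c) ^ 2 < x) :
    mpStieltjes s c x = (((s * (1 - c) - x
      + √((x - s * (1 - √c) ^ 2) * (x - s * (1 + √c) ^ 2))) / (2 * s * c * x) : ℝ) : ℂ) := by
  have hsqrt_c : 0 < √c := sqrt_pos.2 hc
  have hx₀ : 0 < x := lt_of_le_of_lt (by positivity) hx
  have hcast : ∀ l : ℝ,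
      ((√((l - s * (1 - √c) ^ 2) * (s * (1 + √c) ^ 2 - l)) / (2 * π * s * c * l) : ℝ) : ℂ)
        * (1 / ((l : ℂ) - x))
      = ((√((l - s * (1 - √c) ^ 2) * (s * (1 + √c) ^ 2 - l)) / (2 * π * s * c * l)
          * (1 / (l - x)) : ℝ) : ℂ) := by
    intro l; push_cast; rfl
  rw [mpStieltjes]
  simp only [hcast]
  rw [intervalIntegral.integral_ofReal, integral_sqrt_mul_div_mul_mul_one_div_sub (by positivity)
      (by nlinarith) hx, ← Complex.ofReal_div, ← Complex.ofReal_sub, sqrt_mul_mp_edges hs.le hc.le,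
    mul_abs_one_sub_eq hc]
  congr 1
  field_simp
  ring

lemma pos_of_mul_sqrt_lt (hs : 0 ≤ s) (hγ : s * √c < γ) : 0 < γ :=
  lt_of_le_of_lt (by positivity) hγ

lemma sq_sub_sq_mul_pos_of_mul_sqrt_lt (hs : 0 ≤ s) (hc : 0 ≤ c) (hγ : s * √c < γ) :
    0 < γ ^ 2 - s ^ 2 * c := by
  nlinarith [sq_sqrt hc, mul_nonneg hs (sqrt_nonneg c)]

lemma sub_mul_sub_mp_edges (hc : 0 ≤ c) (x : ℝ) :
    (x - s * (1 - √c) ^ 2) * (x - s * (1 + √c) ^ 2) = (x - s * (1 + c)) ^ 2 - 4 * s ^ 2 * c := by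
  linear_combination (-s * (2 * (x - s) - s * √c ^ 2 - s * c) - 4 * s ^ 2) * sq_sqrt hc

/-- The point `x_γ = (γ + σ²)(γ + σ²c)/γ`. -/
noncomputable def mpPhi (s c γ : ℝ) : ℝ := (γ + s) * (γ + s * c) / γ

lemma mpPhi_sub_mul_mpPhi_sub (hc : 0 ≤ c) (hγ₀ : γ ≠ 0) :
    (mpPhi s c γ - s * (1 - √c) ^ 2) * (mpPhi s c γ - s * (1 + √c) ^ 2)
      = ((γ ^ 2 - s ^ 2 * c) / γ) ^ 2 := by
  rw [sub_mul_sub_mp_edges hc, mpPhi]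
  field_simp
  ring

lemma mp_upper_edge_lt_mpPhi (hs : 0 ≤ s) (hc : 0 ≤ c) (hγ : s * √c < γ) :
    s * (1 + √c) ^ 2 < mpPhi s c γ := by
  have hγ₀ := pos_of_mul_sqrt_lt hs hγ
  have : mpPhi s c γ - s * (1 + √c) ^ 2 = (γ - s * √c) ^ 2 / γ := by
    rw [mpPhi]
    field_simp
    linear_combination (-γ * s - s ^ 2) * sq_sqrt hc
  have : 0 < (γ - s * √c) ^ 2 / γ := by
    have := sub_pos.2 hγ
    positivity
  linarith

lemma hasStrictDerivAt_mpPhi (hγ₀ : γ ≠ 0) :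
    HasStrictDerivAt (mpPhi s c) ((γ ^ 2 - s ^ 2 * c) / γ ^ 2) γ := by
  refine ((((hasStrictDerivAt_id γ).add_const s).mul
    ((hasStrictDerivAt_id γ).add_const (s * c))).div (hasStrictDerivAt_id γ) hγ₀).congr_deriv ?_
  simp only [id, Pi.mul_apply]
  field_simp
  ring

lemma mpStieltjes_mpPhi (hs : 0 < s) (hc : 0 < c) (hγ : s * √c < γ) :
    mpStieltjes s c (mpPhi s c γ) = ((-(γ + s * c)⁻¹ : ℝ) : ℂ) := by
  have hγ₀ := pos_of_mul_sqrt_lt hs.le hγ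
  have hgap := sq_sub_sq_mul_pos_of_mul_sqrt_lt hs.le hc.le hγ
  rw [mpStieltjes_ofReal_of_lt hs hc (mp_upper_edge_lt_mpPhi hs.le hc.le hγ),
    mpPhi_sub_mul_mpPhi_sub hc.le hγ₀.ne', sqrt_sq (by positivity), mpPhi]
  congr 1
  field_simp
  ring

lemma mpMtilde_mpPhi (hs : 0 < s) (hc : 0 < c) (hγ : s * √c < γ) :
    mpMtilde s c (mpPhi s c γ) = ((-(γ + s)⁻¹ : ℝ) : ℂ) := by
  have hγ₀ := pos_of_mul_sqrt_lt hs.le hγ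
  have hreal : -1 / (mpPhi s c γ * (1 + s * c * -(γ + s * c)⁻¹)) = -(γ + s)⁻¹ := by
    have : γ ≠ 0 := hγ₀.ne'
    have : γ + s ≠ 0 := by positivity
    have : γ + s * c ≠ 0 := by positivity
    rw [mpPhi, show 1 + s * c * -(γ + s * c)⁻¹ = γ / (γ + s * c) by field_simp; ring]
    field_simp
  rw [mpMtilde, mpStieltjes_mpPhi hs hc hγ, ← hreal]
  push_cast
  rfl

lemma mpTau_mpPhi (hs : 0 < s) (hc : 0 < c) (hγ : s * √c < γ) :
    mpTau s c (mpPhi s c γ) = ((γ⁻¹ : ℝ) : ℂ) := by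
  have hγ₀ := pos_of_mul_sqrt_lt hs.le hγ
  have hreal : mpPhi s c γ * -(γ + s * c)⁻¹ * -(γ + s)⁻¹ = γ⁻¹ := by
    have : γ + s ≠ 0 := by positivity
    have : γ + s * c ≠ 0 := by positivity
    rw [mpPhi]
    field_simp
  rw [mpTau, mpStieltjes_mpPhi hs hc hγ, mpMtilde_mpPhi hs hc hγ, ← hreal]
  push_cast
  rfl

lemma hasDerivAt_of_comp_mpPhi (hs : 0 < s) (hc : 0 < c) (hγ : s * √c < γ) {f : ℝ → ℂ}
    {g : ℝ → ℝ} {g' : ℝ} (hg : HasDerivAt g g' γ)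
    (hfg : ∀ u, s * √c < u → f (mpPhi s c u) = g u) :
    HasDerivAt f ((γ ^ 2 / (γ ^ 2 - s ^ 2 * c) * g' : ℝ) : ℂ) (mpPhi s c γ) := by
  have hγ₀ := pos_of_mul_sqrt_lt hs.le hγ
  have hgap := sq_sub_sq_mul_pos_of_mul_sqrt_lt hs.le hc.le hγ
  refine ((hasStrictDerivAt_mpPhi hγ₀.ne').hasDerivAt_of_comp_eventuallyEq
    (by positivity) hg.ofReal_comp ?_).congr_deriv ?_
  · filter_upwards [Ioi_mem_nhds hγ] with u hu using hfg u hu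
  · rw [Complex.real_smul, ← Complex.ofReal_mul, inv_div]

end MarcenkoPastur

/-- for `γ > σ²√c` and `x_γ = (γ + σ²)(γ + σ²c)/γ`, the real functions
`x ↦ m(x)`, `x ↦ m̃(x)` and `x ↦ τ(x)` are differentiable at `x_γ` with derivatives
`γ²/((γ + σ²c)²(γ² − σ⁴c))`, `γ²/((γ + σ²)²(γ² − σ⁴c))` and `−1/(γ² − σ⁴c)` respectively. -/
theorem mp_derivatives_at_phi (s c γ : ℝ) (hs : 0 < s) (hc : 0 < c)
    (hγ : s * Real.sqrt c < γ) :
    HasDerivAt (fun x : ℝ => mpStieltjes s c (x : ℂ))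
      (((γ ^ 2 / ((γ + s * c) ^ 2 * (γ ^ 2 - s ^ 2 * c))) : ℝ) : ℂ)
      ((γ + s) * (γ + s * c) / γ) ∧
    HasDerivAt (fun x : ℝ => mpMtilde s c (x : ℂ))
      (((γ ^ 2 / ((γ + s) ^ 2 * (γ ^ 2 - s ^ 2 * c))) : ℝ) : ℂ)
      ((γ + s) * (γ + s * c) / γ) ∧
    HasDerivAt (fun x : ℝ => mpTau s c (x : ℂ))
      (((-(1 / (γ ^ 2 - s ^ 2 * c))) : ℝ) : ℂ)
      ((γ + s) * (γ + s * c) / γ) := by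
  have hγ₀ := pos_of_mul_sqrt_lt hs.le hγ
  refine ⟨?_, ?_, ?_⟩
  · refine (hasDerivAt_of_comp_mpPhi hs hc hγ
      ((hasDerivAt_inv (by positivity)).comp_add_const γ (s * c)).neg
      fun u hu => mpStieltjes_mpPhi hs hc hu).congr_deriv (congrArg _ ?_)
    rw [neg_neg, ← div_eq_mul_inv, div_div, mul_comm]
  · refine (hasDerivAt_of_comp_mpPhi hs hc hγ
      ((hasDerivAt_inv (by positivity)).comp_add_const γ s).neg
      fun u hu => mpMtilde_mpPhi hs hc hu).congr_deriv (congrArg _ ?_)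
    rw [neg_neg, ← div_eq_mul_inv, div_div, mul_comm]
  · refine (hasDerivAt_of_comp_mpPhi hs hc hγ (hasDerivAt_inv hγ₀.ne')
      fun u hu => mpTau_mpPhi hs hc hu).congr_deriv (congrArg _ ?_)
    field_simp
end

section
/- Let σ² > 0, γ > 0, L ≥ 1 an integer, c₁, …, c_L > 0, and c₀ = (Σ_{ℓ=1}^L 1/c_ℓ)⁻¹. Let Θ be the (L+1)×(L+1) real symmetric matrix indexed by 0, …, L with diagonal entries Θ_{ℓℓ} = c_ℓ(γ² − σ⁴c_ℓ)(γ + σ²)²/γ² for ℓ = 0, …, L, off-diagonal entries Θ_{0ℓ} = Θ_{ℓ0} = c₀(γ² − σ⁴c_ℓ)(γ + σ²)²/γ² for ℓ = 1, …, L, and all other entries zero. Then det(Θ) = σ⁴c₀²(L−1) · ((γ + σ²)/γ)^{2(L+1)} · Π_{ℓ=1}^L c_ℓ(γ² − σ⁴c_ℓ). -/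
/-!
`Θ` is an arrowhead matrix whose first row is proportional to its diagonal:
`Θ₀ℓ = (c₀ / c_ℓ) Θℓℓ`. Subtracting these multiples of the rows `ℓ ≥ 1` from row `0` leaves a
lower triangular matrix, so `det Θ` is the product of the diagonal `Θℓℓ` with the new pivot
`Θ₀₀ - Σ (c₀ / c_ℓ) Θℓ₀`, which collapses to `s² c₀² (L - 1) (γ + s)² / γ²` (with `s = σ²`)
because `c₀ Σ 1 / c_ℓ = 1`.
-/

namespace Matrix

variable {R : Type*} [CommRing R] {n : ℕ}

def IsArrowhead (A : Matrix (Fin (n + 1)) (Fin (n + 1)) R) : Prop :=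
  ∀ i j : Fin n, i ≠ j → A i.succ j.succ = 0

theorem IsArrowhead.det_eq {A : Matrix (Fin (n + 1)) (Fin (n + 1)) R} (hA : A.IsArrowhead)
    (w : Fin n → R) (hw : ∀ i, A 0 i.succ = w i * A i.succ i.succ) :
    A.det = (A 0 0 - ∑ i : Fin n, w i * A i.succ 0) * ∏ i : Fin n, A i.succ i.succ := by
  set B := A.updateRow 0 (∑ k, (Fin.cons 1 (-w) : Fin (n + 1) → R) k • A k)
  have hB0 (j : Fin (n + 1)) : B 0 j = A 0 j - ∑ i : Fin n, w i * A i.succ j := by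
    simp [B, Fin.sum_univ_succ, sub_eq_add_neg]
  have hBsucc (i : Fin n) : B i.succ = A i.succ := updateRow_ne (Fin.succ_ne_zero i)
  have hdet : B.det = A.det := by
    simpa using det_updateRow_sum A 0 (Fin.cons 1 (-w))
  have hlower : B.IsLowerTriangular := by
    intro i j hij
    change i < j at hij
    cases j using Fin.cases with
    | zero => exact absurd hij (Fin.not_lt_zero i)
    | succ j =>
      cases i using Fin.cases with
      | zero =>
        rw [hB0, hw, Finset.sum_eq_single j (fun i _ hij => by rw [hA i j hij, mul_zero])
          (by simp), sub_self]
      | succ i => rw [hBsucc]; exact hA i j (Fin.succ_lt_succ_iff.mp hij).ne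
  rw [← hdet, det_of_isLowerTriangular B hlower, Fin.prod_univ_succ, hB0]
  simp only [hBsucc]

end Matrix

theorem det_Theta_general (s γ : ℝ) (L : ℕ) (hL : 1 ≤ L)
    (c : Fin L → ℝ) (hc : ∀ ℓ, 0 < c ℓ) :
    ∀ c₀ : ℝ, c₀ = (∑ ℓ, (c ℓ)⁻¹)⁻¹ →
    ∀ cc : Fin (L + 1) → ℝ, cc = Fin.cases c₀ c →
    ∀ Θ : Matrix (Fin (L + 1)) (Fin (L + 1)) ℝ,
      Θ = Matrix.of (fun i j =>
        if i = j then cc i * (γ ^ 2 - s ^ 2 * cc i) * (γ + s) ^ 2 / γ ^ 2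
        else if i = 0 then c₀ * (γ ^ 2 - s ^ 2 * cc j) * (γ + s) ^ 2 / γ ^ 2
        else if j = 0 then c₀ * (γ ^ 2 - s ^ 2 * cc i) * (γ + s) ^ 2 / γ ^ 2
        else 0) →
    Θ.det = s ^ 2 * c₀ ^ 2 * ((L : ℝ) - 1) * ((γ + s) / γ) ^ (2 * (L + 1)) *
      ∏ ℓ, (c ℓ * (γ ^ 2 - s ^ 2 * c ℓ)) := by
  intro c₀ hc₀ cc hcc Θ hΘ
  set K := (γ + s) ^ 2 / γ ^ 2
  have hc₀_mul_sum : c₀ * ∑ ℓ, (c ℓ)⁻¹ = 1 := by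
    have : Nonempty (Fin L) := ⟨⟨0, hL⟩⟩
    rw [hc₀]
    exact inv_mul_cancel₀ (Finset.sum_pos (fun ℓ _ => inv_pos.mpr (hc ℓ)) Finset.univ_nonempty).ne'
  have hentry (i j : Fin (L + 1)) : Θ i j =
      if i = j then cc i * (γ ^ 2 - s ^ 2 * cc i) * K
      else if i = 0 then c₀ * (γ ^ 2 - s ^ 2 * cc j) * K
      else if j = 0 then c₀ * (γ ^ 2 - s ^ 2 * cc i) * K
      else 0 := by
    simp only [hΘ, Matrix.of_apply, mul_div_assoc, K]
  have harrow : Θ.IsArrowhead := fun i j hij => by simp [hentry, hij]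
  have hw (ℓ : Fin L) : Θ 0 ℓ.succ = c₀ / c ℓ * Θ ℓ.succ ℓ.succ := by
    simp only [hentry, (Fin.succ_ne_zero ℓ).symm, ↓reduceIte, hcc, Fin.cases_succ]
    field_simp [(hc ℓ).ne']
  have hpivot : Θ 0 0 - ∑ ℓ, c₀ / c ℓ * Θ ℓ.succ 0 = s ^ 2 * c₀ ^ 2 * ((L : ℝ) - 1) * K := by
    have hterm (ℓ : Fin L) :
        c₀ / c ℓ * Θ ℓ.succ 0 = c₀ ^ 2 * K * γ ^ 2 * (c ℓ)⁻¹ - c₀ ^ 2 * K * s ^ 2 := by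
      simp only [hentry, Fin.succ_ne_zero, ↓reduceIte, hcc, Fin.cases_succ]
      field_simp [(hc ℓ).ne']
    simp only [hterm, Finset.sum_sub_distrib, ← Finset.mul_sum, Finset.sum_const, Finset.card_univ,
      Fintype.card_fin, nsmul_eq_mul]
    simp only [hentry, hcc, if_true, Fin.cases_zero]
    linear_combination (-(c₀ * γ ^ 2 * K)) * hc₀_mul_sum
  have hdiag (ℓ : Fin L) : Θ ℓ.succ ℓ.succ = c ℓ * (γ ^ 2 - s ^ 2 * c ℓ) * K := by
    simp [hentry, hcc]
  have hK : ((γ + s) / γ) ^ (2 * (L + 1)) = K ^ (L + 1) := by rw [pow_mul, div_pow]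
  rw [harrow.det_eq _ hw, hpivot, hK]
  simp only [hdiag, Finset.prod_mul_distrib, Finset.prod_const, Finset.card_univ, Fintype.card_fin]
  ring

/-- determinant of the arrowhead covariance matrix `Θ` (indexed by `0, …, L`,
with `cc 0 = c₀ = (Σ 1/c_ℓ)⁻¹`):
`det Θ = σ⁴c₀²(L−1)·((γ + σ²)/γ)^{2(L+1)}·Π_{ℓ=1}^L c_ℓ(γ² − σ⁴c_ℓ)`. -/
theorem det_Theta (s γ : ℝ) (hs : 0 < s) (hγ : 0 < γ) (L : ℕ) (hL : 1 ≤ L)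
    (c : Fin L → ℝ) (hc : ∀ ℓ, 0 < c ℓ) :
    ∀ c₀ : ℝ, c₀ = (∑ ℓ, (c ℓ)⁻¹)⁻¹ →
    ∀ cc : Fin (L + 1) → ℝ, cc = Fin.cases c₀ c →
    ∀ Θ : Matrix (Fin (L + 1)) (Fin (L + 1)) ℝ,
      Θ = Matrix.of (fun i j =>
        if i = j then cc i * (γ ^ 2 - s ^ 2 * cc i) * (γ + s) ^ 2 / γ ^ 2
        else if i = 0 then c₀ * (γ ^ 2 - s ^ 2 * cc j) * (γ + s) ^ 2 / γ ^ 2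
        else if j = 0 then c₀ * (γ ^ 2 - s ^ 2 * cc i) * (γ + s) ^ 2 / γ ^ 2
        else 0) →
    Θ.det = s ^ 2 * c₀ ^ 2 * ((L : ℝ) - 1) * ((γ + s) / γ) ^ (2 * (L + 1)) *
      ∏ ℓ, (c ℓ * (γ ^ 2 - s ^ 2 * c ℓ)) :=
  det_Theta_general s γ L hL c hc
end

section
/- Let σ² > 0, L ≥ 2 an integer, c₁, …, c_L > 0, c₀ = (Σ_{ℓ=1}^L 1/c_ℓ)⁻¹, and γ > σ²·max(√c₁, …, √c_L). Let Θ be the (L+1)×(L+1) real symmetric matrix indexed by 0, …, L with diagonal entries Θ_{ℓℓ} = c_ℓ(γ² − σ⁴c_ℓ)(γ + σ²)²/γ² for ℓ = 0, …, L, off-diagonal entries Θ_{0ℓ} = Θ_{ℓ0} = c₀(γ² − σ⁴c_ℓ)(γ + σ²)²/γ² for ℓ = 1, …, L, and all other entries zero. Then Θ is positive definite. -/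
/-!
Write `D x = γ² - s² x`; then `D (c ℓ) > 0` because `s √(c ℓ) < γ`. Up to the positive factor
`(γ + s)² / γ²`, `Θ` is the arrowhead matrix with corner `c₀ D c₀`, arm `c₀ D (c ℓ)` and diagonal
`c ℓ D (c ℓ)`. Completing the square, an arrowhead matrix with positive diagonal is positive
definite as soon as its Schur complement `a - ∑ b ℓ² / d ℓ` is positive. Here `∑ 1 / c ℓ = 1 / c₀`
gives `c₀ ∑ D (c ℓ) / c ℓ = γ² - s² L c₀`, so the Schur complement is `s² c₀² (L - 1) > 0`.
-/

namespace Matrix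

section Arrowhead

variable {R : Type*} [CommRing R] {n : ℕ}

/-- Corner `a` at `(0, 0)`, arm `b` along row and column `0`, diagonal `d` on the rest. -/
def arrowhead (a : R) (b d : Fin n → R) : Matrix (Fin (n + 1)) (Fin (n + 1)) R :=
  Matrix.of fun i j =>
    Fin.cases (Fin.cases a b j) (fun k => Fin.cases (b k) (fun l => if k = l then d k else 0) j) i

@[simp] lemma arrowhead_zero_zero (a : R) (b d : Fin n → R) : arrowhead a b d 0 0 = a := rfl

@[simp] lemma arrowhead_zero_succ (a : R) (b d : Fin n → R) (k : Fin n) :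
    arrowhead a b d 0 k.succ = b k := rfl

@[simp] lemma arrowhead_succ_zero (a : R) (b d : Fin n → R) (k : Fin n) :
    arrowhead a b d k.succ 0 = b k := rfl

@[simp] lemma arrowhead_succ_succ (a : R) (b d : Fin n → R) (k l : Fin n) :
    arrowhead a b d k.succ l.succ = if k = l then d k else 0 := rfl

lemma arrowhead_isSymm (a : R) (b d : Fin n → R) : (arrowhead a b d).IsSymm := by
  ext i j
  cases i using Fin.cases <;> cases j using Fin.cases <;>
    simp only [transpose_apply, arrowhead_zero_zero, arrowhead_zero_succ, arrowhead_succ_zero,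
      arrowhead_succ_succ]
  split_ifs <;> simp_all

lemma dotProduct_arrowhead_mulVec (a : R) (b d : Fin n → R) (x : Fin (n + 1) → R) :
    x ⬝ᵥ arrowhead a b d *ᵥ x
      = a * x 0 ^ 2 + ∑ k, (2 * b k * x 0 * x k.succ + d k * x k.succ ^ 2) := by
  simp only [dotProduct, mulVec, Fin.sum_univ_succ, arrowhead_zero_zero, arrowhead_zero_succ,
    arrowhead_succ_zero, arrowhead_succ_succ, ite_mul, zero_mul, mul_ite, mul_zero,
    Finset.sum_ite_eq, Finset.mem_univ, if_true, mul_add, Finset.mul_sum]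
  rw [add_assoc, ← Finset.sum_add_distrib]
  congr 1
  · ring
  · exact Finset.sum_congr rfl fun k _ => by ring

end Arrowhead

lemma dotProduct_arrowhead_mulVec_eq_add_sum_sq {n : ℕ} (a : ℝ) (b : Fin n → ℝ) {d : Fin n → ℝ}
    (hd : ∀ k, d k ≠ 0) (x : Fin (n + 1) → ℝ) :
    x ⬝ᵥ arrowhead a b d *ᵥ x
      = (a - ∑ k, b k ^ 2 / d k) * x 0 ^ 2 + ∑ k, d k * (x k.succ + b k / d k * x 0) ^ 2 := by
  have complete_square : ∀ k, 2 * b k * x 0 * x k.succ + d k * x k.succ ^ 2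
      = d k * (x k.succ + b k / d k * x 0) ^ 2 - b k ^ 2 / d k * x 0 ^ 2 := fun k => by
    field_simp [hd k]
    ring
  rw [dotProduct_arrowhead_mulVec, Finset.sum_congr rfl fun k _ => complete_square k,
    Finset.sum_sub_distrib, sub_mul, Finset.sum_mul]
  ring

theorem arrowhead_posDef {n : ℕ} {a : ℝ} {b d : Fin n → ℝ} (hd : ∀ k, 0 < d k)
    (hschur : ∑ k, b k ^ 2 / d k < a) : (arrowhead a b d).PosDef := by
  refine .of_dotProduct_mulVec_pos (isHermitian_iff_isSymm.mpr (arrowhead_isSymm a b d))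
    fun x hx => ?_
  rw [star_trivial, dotProduct_arrowhead_mulVec_eq_add_sum_sq a b (fun k => (hd k).ne')]
  have hterm : ∀ k, 0 ≤ d k * (x k.succ + b k / d k * x 0) ^ 2 := fun k => by
    have := hd k
    positivity
  by_cases hx0 : x 0 = 0
  · obtain ⟨i, hi⟩ := Function.ne_iff.mp hx
    obtain ⟨k, rfl⟩ := Fin.eq_succ_of_ne_zero (show i ≠ 0 by rintro rfl; exact hi hx0)
    have hk : 0 < d k * (x k.succ + b k / d k * x 0) ^ 2 := by
      rw [hx0, mul_zero, add_zero]
      exact mul_pos (hd k) (sq_pos_iff.mpr hi)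
    have hsum := Finset.sum_pos' (fun k _ => hterm k) ⟨k, Finset.mem_univ k, hk⟩
    have hcorner : (a - ∑ k, b k ^ 2 / d k) * x 0 ^ 2 = 0 := by rw [hx0]; ring
    linarith
  · have := sub_pos.mpr hschur
    exact add_pos_of_pos_of_nonneg (by positivity) (Finset.sum_nonneg fun k _ => hterm k)

end Matrix

open Matrix

lemma mul_sq_lt_sq_of_mul_sqrt_lt {s c γ : ℝ} (hs : 0 ≤ s) (hc : 0 ≤ c) (h : s * √c < γ) :
    s ^ 2 * c < γ ^ 2 := by
  calc s ^ 2 * c = (s * √c) ^ 2 := by rw [mul_pow, Real.sq_sqrt hc]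
    _ < γ ^ 2 := pow_lt_pow_left₀ h (by positivity) two_ne_zero

lemma inv_sum_inv_mul_sum_sub_mul_div {ι : Type*} [Fintype ι] {c : ι → ℝ} (hc : ∀ i, c i ≠ 0)
    (hS : ∑ i, (c i)⁻¹ ≠ 0) (g t : ℝ) :
    (∑ i, (c i)⁻¹)⁻¹ * ∑ i, (g - t * c i) / c i
      = g - t * Fintype.card ι * (∑ i, (c i)⁻¹)⁻¹ := by
  have hsum : ∑ i, (g - t * c i) / c i = g * ∑ i, (c i)⁻¹ - t * Fintype.card ι := by
    rw [Fintype.card_eq_sum_ones, Nat.cast_sum, Finset.mul_sum, Finset.mul_sum,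
      ← Finset.sum_sub_distrib]
    refine Finset.sum_congr rfl fun i _ => ?_
    rw [Nat.cast_one, mul_one, sub_div, div_eq_mul_inv, mul_div_cancel_right₀ t (hc i)]
  rw [hsum, mul_sub, mul_left_comm, inv_mul_cancel₀ hS, mul_one]
  ring

lemma sum_sq_div_lt_of_eq_inv_sum_inv {ι : Type*} [Fintype ι] (hι : 1 < Fintype.card ι)
    {c : ι → ℝ} (hc : ∀ i, 0 < c i) {s γ : ℝ} (hs : s ≠ 0) (hD : ∀ i, γ ^ 2 - s ^ 2 * c i ≠ 0)
    {c₀ : ℝ} (hc₀ : c₀ = (∑ i, (c i)⁻¹)⁻¹) :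
    ∑ i, (c₀ * (γ ^ 2 - s ^ 2 * c i)) ^ 2 / (c i * (γ ^ 2 - s ^ 2 * c i))
      < c₀ * (γ ^ 2 - s ^ 2 * c₀) := by
  have hS : 0 < ∑ i, (c i)⁻¹ :=
    Finset.sum_pos (fun i _ => inv_pos.2 (hc i)) 
      (Finset.univ_nonempty_iff.2 (Fintype.card_pos_iff.1 (by omega)))
  have hc₀_pos : 0 < c₀ := hc₀ ▸ inv_pos.2 hS
  have hcard : (1 : ℝ) < Fintype.card ι := by exact_mod_cast hι
  calc _ = c₀ * (c₀ * ∑ i, (γ ^ 2 - s ^ 2 * c i) / c i) := by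
        rw [Finset.mul_sum, Finset.mul_sum]
        refine Finset.sum_congr rfl fun i _ => ?_
        field_simp [(hc i).ne', hD i]
    _ = c₀ * (γ ^ 2 - s ^ 2 * Fintype.card ι * c₀) := by
        rw [hc₀, inv_sum_inv_mul_sum_sub_mul_div (fun i => (hc i).ne') hS.ne']
    _ < c₀ * (γ ^ 2 - s ^ 2 * c₀) := by
        gcongr
        nlinarith [mul_pos (sq_pos_iff.mpr hs) hc₀_pos]

/-- for `L ≥ 2`, `c₁, …, c_L > 0`, `c₀ = (Σ 1/c_ℓ)⁻¹` and
`γ > σ²·max(√c₁, …, √c_L)`, the arrowhead covariance matrix `Θ` is positive definite. -/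
theorem Theta_posDef (s : ℝ) (hs : 0 < s) (L : ℕ) (hL : 2 ≤ L)
    (c : Fin L → ℝ) (hc : ∀ ℓ, 0 < c ℓ) (γ : ℝ)
    (hγ : ∀ ℓ, s * Real.sqrt (c ℓ) < γ) :
    ∀ c₀ : ℝ, c₀ = (∑ ℓ, (c ℓ)⁻¹)⁻¹ →
    ∀ cc : Fin (L + 1) → ℝ, cc = Fin.cases c₀ c →
    ∀ Θ : Matrix (Fin (L + 1)) (Fin (L + 1)) ℝ,
      Θ = Matrix.of (fun i j =>
        if i = j then cc i * (γ ^ 2 - s ^ 2 * cc i) * (γ + s) ^ 2 / γ ^ 2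
        else if i = 0 then c₀ * (γ ^ 2 - s ^ 2 * cc j) * (γ + s) ^ 2 / γ ^ 2
        else if j = 0 then c₀ * (γ ^ 2 - s ^ 2 * cc i) * (γ + s) ^ 2 / γ ^ 2
        else 0) →
    Θ.PosDef := by
  intro c₀ hc₀ cc hcc Θ hΘ
  have hγ0 : 0 < γ := (mul_nonneg hs.le (Real.sqrt_nonneg _)).trans_lt (hγ ⟨0, by omega⟩)
  have hD : ∀ ℓ, 0 < γ ^ 2 - s ^ 2 * c ℓ := fun ℓ =>
    sub_pos.mpr (mul_sq_lt_sq_of_mul_sqrt_lt hs.le (hc ℓ).le (hγ ℓ))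
  have hΘ_eq : Θ = ((γ + s) ^ 2 / γ ^ 2) • arrowhead (c₀ * (γ ^ 2 - s ^ 2 * c₀))
      (fun ℓ => c₀ * (γ ^ 2 - s ^ 2 * c ℓ)) (fun ℓ => c ℓ * (γ ^ 2 - s ^ 2 * c ℓ)) := by
    subst hΘ hcc
    ext i j
    cases i using Fin.cases <;> cases j using Fin.cases <;>
      simp only [of_apply, Matrix.smul_apply, smul_eq_mul, Fin.cases_zero, Fin.cases_succ,
        Fin.succ_inj, Fin.succ_ne_zero, (Fin.succ_ne_zero _).symm, ↓reduceIte, arrowhead_zero_zero,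
        arrowhead_zero_succ, arrowhead_succ_zero, arrowhead_succ_succ, mul_ite, mul_zero] <;>
      (try split_ifs) <;> ring
  have hschur := sum_sq_div_lt_of_eq_inv_sum_inv (by rw [Fintype.card_fin]; omega) hc hs.ne'
    (fun ℓ => (hD ℓ).ne') hc₀
  rw [hΘ_eq]
  exact (arrowhead_posDef (fun ℓ => mul_pos (hc ℓ) (hD ℓ)) hschur).smul (by positivity)
end

section
/- Let M ≥ 2 be an integer, σ² > 0, γ > 0, and let u₁, u₂ ∈ ℂ^M be unit vectors with u₁*u₂ = 0. Set R₁ = γ·u₁u₁* + σ²·I and R₂ = γ·u₂u₂* + σ²·I (M×M complex matrices, where I is the identity). Then R₂ is invertible and the characteristic polynomial of R₂⁻¹R₁ equals (X − (γ + σ²)/σ²) · (X − σ²/(γ + σ²)) · (X − 1)^{M−2}; in particular the eigenvalues of R₂⁻¹R₁ are (γ + σ²)/σ², σ²/(γ + σ²), and 1 with multiplicity M − 2. -/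
/-!
With `P = u₂u₂*` idempotent, `R₂⁻¹ = σ⁻²(1 - γ/(γ+σ²) P)`, and since `u₂*u₁ = 0` this gives
`R₂⁻¹R₁ = 1 + (γ/σ²) u₁u₁* - γ/(γ+σ²) u₂u₂*`. The perturbation of the identity is `UV` with
`U = [u₁ u₂]` of size `M × 2`; by `X^2 χ(UV) = X^M χ(VU)` its characteristic polynomial is
`X^(M-2)` times that of the diagonal `2 × 2` matrix `VU = diag(γ/σ², -γ/(γ+σ²))`, and shifting by
the identity gives the eigenvalues `1 + γ/σ²`, `1 - γ/(γ+σ²)` and `1`.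
-/

open Polynomial Matrix

section Algebra

variable {K A : Type*} [Field K] [Ring A] [Algebra K A]

theorem IsIdempotentElem.smul_add_smul_one_mul_eq_one {P : A} (hP : IsIdempotentElem P)
    {a b : K} (hb : b ≠ 0) (hab : a + b ≠ 0) :
    (a • P + b • 1) * (b⁻¹ • (1 - (a / (a + b)) • P)) = 1 := by
  simp only [mul_smul_comm, smul_mul_assoc, mul_sub, add_mul, mul_one, one_mul, hP.eq, smul_sub,
    smul_add, smul_smul]
  match_scalars <;> field_simp; ring

theorem inv_smul_one_sub_smul_mul_smul_add_smul_one {P Q : A} (hPQ : P * Q = 0) {a b c : K}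
    (hb : b ≠ 0) : (b⁻¹ • (1 - c • P)) * (a • Q + b • 1) = 1 + (a / b) • Q - c • P := by
  simp only [mul_smul_comm, smul_mul_assoc, sub_mul, mul_add, mul_one, one_mul, hPQ, smul_sub,
    smul_smul, smul_zero]
  match_scalars <;> field_simp

end Algebra

namespace Matrix

variable {R n ι : Type*} [CommRing R] [Fintype n] [DecidableEq n] [Fintype ι] [DecidableEq ι]

theorem charpoly_one_add (A : Matrix n n R) : (1 + A).charpoly = A.charpoly.comp (X - 1) := by
  simpa [sub_eq_add_neg, add_comm] using charpoly_sub_scalar A (-1)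

theorem charpoly_sum_vecMulVec_of_pairwise (u v : ι → n → R)
    (huv : Pairwise fun i j => v i ⬝ᵥ u j = 0) (hcard : Fintype.card ι ≤ Fintype.card n) :
    (∑ i, vecMulVec (u i) (v i)).charpoly =
      X ^ (Fintype.card n - Fintype.card ι) * ∏ i, (X - C (v i ⬝ᵥ u i)) := by
  have hfactor : ∑ i, vecMulVec (u i) (v i) = (of u)ᵀ * of v := by
    ext k l
    simp [mul_apply, vecMulVec_apply, Matrix.sum_apply]
  have hdiag : of v * (of u)ᵀ = diagonal fun i => v i ⬝ᵥ u i := by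
    ext i j
    by_cases hij : i = j
    · subst hij; simp [mul_apply, dotProduct]
    · simpa [mul_apply, dotProduct, hij] using huv hij
  rw [hfactor, charpoly_mul_comm_of_le _ _ hcard, hdiag, charpoly_diagonal]

end Matrix

/-- for orthogonal unit vectors `u₁, u₂` and
`R₁ = γu₁u₁* + σ²I`, `R₂ = γu₂u₂* + σ²I`, the matrix `R₂` is invertible and the
characteristic polynomial of `R₂⁻¹R₁` is
`(X − (γ+σ²)/σ²)(X − σ²/(γ+σ²))(X − 1)^{M−2}`. -/
theorem charpoly_subspace_change (M : ℕ) (hM : 2 ≤ M) (s γ : ℝ) (hs : 0 < s) (hγ : 0 < γ)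
    (u₁ u₂ : Fin M → ℂ)
    (hu₁ : dotProduct (star u₁) u₁ = 1)
    (hu₂ : dotProduct (star u₂) u₂ = 1)
    (horth : dotProduct (star u₁) u₂ = 0) :
    ∀ R₁ R₂ : Matrix (Fin M) (Fin M) ℂ,
      R₁ = (γ : ℂ) • Matrix.vecMulVec u₁ (star u₁) + (s : ℂ) • (1 : Matrix (Fin M) (Fin M) ℂ) →
      R₂ = (γ : ℂ) • Matrix.vecMulVec u₂ (star u₂) + (s : ℂ) • (1 : Matrix (Fin M) (Fin M) ℂ) →
      IsUnit R₂.det ∧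
      (R₂⁻¹ * R₁).charpoly =
        (X - C ((((γ + s) / s : ℝ)) : ℂ)) * (X - C (((s / (γ + s) : ℝ)) : ℂ)) *
          (X - 1) ^ (M - 2) := by
  rintro R₁ R₂ rfl rfl
  have hs' : (s : ℂ) ≠ 0 := by exact_mod_cast hs.ne'
  have hγs : (γ : ℂ) + s ≠ 0 := by exact_mod_cast (add_pos hγ hs).ne'
  have heig₁ : (((γ + s) / s : ℝ) : ℂ) = 1 + γ / s := by push_cast; field_simp; ring
  have heig₂ : ((s / (γ + s) : ℝ) : ℂ) = 1 - γ / (γ + s) := by push_cast; field_simp; ring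
  have horth' : star u₂ ⬝ᵥ u₁ = 0 := by rw [star_dotProduct, horth, star_zero]
  have hP₂ : IsIdempotentElem (vecMulVec u₂ (star u₂)) := by
    rw [IsIdempotentElem, vecMulVec_mul_vecMulVec, hu₂, one_smul]
  have hP₂P₁ : vecMulVec u₂ (star u₂) * vecMulVec u₁ (star u₁) = 0 := by
    rw [vecMulVec_mul_vecMulVec, horth', zero_smul, vecMulVec_zero]
  have hinv := hP₂.smul_add_smul_one_mul_eq_one hs' hγs
  refine ⟨isUnit_det_of_right_inverse hinv, ?_⟩
  set c : ℂ := γ / (γ + s)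
  have hrank2 : (γ / s : ℂ) • vecMulVec u₁ (star u₁) - c • vecMulVec u₂ (star u₂) =
      ∑ i, vecMulVec (![u₁, u₂] i) (![(γ / s : ℂ) • star u₁, -c • star u₂] i) := by
    simp [Fin.sum_univ_two, vecMulVec_smul, sub_eq_add_neg]
  have hbiorth : Pairwise fun i j : Fin 2 =>
      ![(γ / s : ℂ) • star u₁, -c • star u₂] i ⬝ᵥ ![u₁, u₂] j = 0 := by
    intro i j hij
    fin_cases i <;> fin_cases j <;> simp_all
  rw [inv_eq_right_inv hinv, inv_smul_one_sub_smul_mul_smul_add_smul_one hP₂P₁ hs', add_sub_assoc,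
    charpoly_one_add, hrank2, charpoly_sum_vecMulVec_of_pairwise _ _ hbiorth (by simpa using hM)]
  simp [Fin.prod_univ_two, hu₁, hu₂, heig₁, heig₂]
  ring
end

section
/- Let σ² > 0, 0 < c < 1/2, and δ ≥ 0. Define ψ(x) = x − log(x) for x > 0 and, for a parameter a > 0, φ_a(γ) = (γ + σ²)(γ + σ²a)/γ for γ > 0. Define, for γ > 0, G_∞(γ) = ψ(φ_c(γ + δ/2)/σ²) − (1/2)·ψ(φ_{2c}(γ)/σ²) − (1/2)·ψ(φ_{2c}(γ + δ)/σ²). Then G_∞(γ) = −c + O(1/γ) as γ → +∞; that is, there exist constants C > 0 and γ₀ > 0 such that |G_∞(γ) + c| ≤ C/γ for all γ ≥ γ₀. -/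
/-!
Writing `y = x + u`, one has `φ_a(y)/s = y/s + 1 + a + s a / y` and
`log (φ_a(y)/s) = log (x/s) + O(1/x)`, so `ψ(φ_a(x + u)/s) = (x + u)/s + 1 + a - log (x/s) + O(1/x)`.
In the combination defining `G` the linear terms and the `log (x/s)` terms cancel and the constants
add up to `(1 + c) - 2 · (1 + 2c)/2 = -c`.
-/

open Real Filter Topology Asymptotics

lemma isBigO_inv_add_atTop (u : ℝ) : (fun x : ℝ => (x + u)⁻¹) =O[atTop] fun x => x⁻¹ :=
  ((IsEquivalent.refl (u := id)).add_isLittleO (isLittleO_const_id_atTop u)).inv.isBigO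

lemma Asymptotics.IsBigO.comp_add_atTop {f : ℝ → ℝ} (hf : f =O[atTop] fun x => x⁻¹) (u : ℝ) :
    (fun x => f (x + u)) =O[atTop] fun x => x⁻¹ :=
  (hf.comp_tendsto (tendsto_atTop_add_const_right _ u tendsto_id)).trans (isBigO_inv_add_atTop u)

lemma isBigO_log_add_sub_log_atTop (t : ℝ) :
    (fun x : ℝ => log (x + t) - log x) =O[atTop] fun x => x⁻¹ := by
  have hlim : Tendsto (fun x : ℝ => 1 + t * x⁻¹) atTop (𝓝 1) := by
    simpa using (tendsto_inv_atTop_zero.const_mul t).const_add 1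
  have hlog := ((hasDerivAt_log one_ne_zero).isBigO_sub).comp_tendsto hlim
  refine (hlog.congr' ?_ ?_).trans (isBigO_const_mul_self t _ _)
  · filter_upwards [eventually_gt_atTop (|t|)] with x hx
    have hx0 : 0 < x := (abs_nonneg t).trans_lt hx
    have hxt : 0 < x + t := by linarith [neg_abs_le t]
    have : 1 + t * x⁻¹ = (x + t) / x := by field_simp
    simp only [Function.comp, this, log_one, sub_zero, log_div hxt.ne' hx0.ne']
  · exact Eventually.of_forall fun x => by simp

lemma exists_pos_bound_of_isBigO_inv {f : ℝ → ℝ} (hf : f =O[atTop] fun x => x⁻¹) :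
    ∃ C > 0, ∃ x₀ > 0, ∀ x ≥ x₀, |f x| ≤ C / x := by
  obtain ⟨C, hC, hfC⟩ := hf.exists_pos
  obtain ⟨x₀, hx₀⟩ := eventually_atTop.mp hfC.bound
  refine ⟨C, hC, max x₀ 1, by positivity, fun x hx => ?_⟩
  have hx0 : 0 < x := lt_of_lt_of_le one_pos ((le_max_right _ _).trans hx)
  simpa [abs_of_pos hx0, div_eq_mul_inv] using hx₀ x ((le_max_left _ _).trans hx)

namespace LowRankGLR

noncomputable def psi (x : ℝ) : ℝ := x - log x

noncomputable def spikeLimit (s a γ : ℝ) : ℝ := (γ + s) * (γ + s * a) / γ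

lemma psi_spikeLimit_sub_eventuallyEq (s a u : ℝ) (hs : s ≠ 0) :
    (fun x => psi (spikeLimit s a (x + u) / s) - ((x + u) / s + 1 + a - log (x / s)))
      =ᶠ[atTop] fun x => s * a * (x + u)⁻¹ - (log (x + u + s) - log (x + u))
        - (log (x + u + s * a) - log (x + u)) - (log (x + u) - log x) := by
  filter_upwards [eventually_gt_atTop (|u| + |s| + |s * a|)] with x hx
  have hy : |s| + |s * a| < x + u := by linarith [neg_abs_le u]
  have hx0 : 0 < x := by linarith [abs_nonneg u, abs_nonneg s, abs_nonneg (s * a)]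
  have hy0 : 0 < x + u := by linarith [abs_nonneg s, abs_nonneg (s * a)]
  have hys : 0 < x + u + s := by linarith [neg_abs_le s, abs_nonneg (s * a)]
  have hysa : 0 < x + u + s * a := by linarith [neg_abs_le (s * a), abs_nonneg s]
  have hrat : spikeLimit s a (x + u) / s = (x + u) / s + 1 + a + s * a * (x + u)⁻¹ := by
    unfold spikeLimit; field_simp; ring
  have hlog : log (spikeLimit s a (x + u) / s)
      = log (x + u + s) + log (x + u + s * a) - log (x + u) - log s := by
    unfold spikeLimit
    rw [log_div (by positivity) hs, log_div (by positivity) hy0.ne', log_mul hys.ne' hysa.ne']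
  rw [psi, hlog, hrat, log_div hx0.ne' hs]
  ring

lemma isBigO_psi_spikeLimit_atTop (s a u : ℝ) (hs : s ≠ 0) :
    (fun x => psi (spikeLimit s a (x + u) / s) - ((x + u) / s + 1 + a - log (x / s)))
      =O[atTop] fun x => x⁻¹ := by
  refine IsBigO.congr' ?_ (psi_spikeLimit_sub_eventuallyEq s a u hs).symm EventuallyEq.rfl
  exact ((((isBigO_const_mul_self (s * a) _ _).trans (isBigO_inv_add_atTop u)).sub
    ((isBigO_log_add_sub_log_atTop s).comp_add_atTop u)).sub
    ((isBigO_log_add_sub_log_atTop (s * a)).comp_add_atTop u)).sub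
    (isBigO_log_add_sub_log_atTop u)

end LowRankGLR

open LowRankGLR in
theorem glr_limit_large_snr_general (s c δ : ℝ) (hs : 0 < s) :
    ∀ ψ : ℝ → ℝ, ψ = (fun x => x - Real.log x) →
    ∀ φ : ℝ → ℝ → ℝ, φ = (fun a γ => (γ + s) * (γ + s * a) / γ) →
    ∀ G : ℝ → ℝ, G = (fun γ => ψ (φ c (γ + δ / 2) / s)
        - (1 / 2) * ψ (φ (2 * c) γ / s) - (1 / 2) * ψ (φ (2 * c) (γ + δ) / s)) →
    ∃ C > 0, ∃ γ₀ > 0, ∀ γ ≥ γ₀, |G γ + c| ≤ C / γ := by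
  intro ψ hψ φ hφ G hG
  set E := fun a u x => psi (spikeLimit s a (x + u) / s) - ((x + u) / s + 1 + a - log (x / s))
  have hGE : (fun γ => G γ + c)
      = fun γ => E c (δ / 2) γ - 1 / 2 * E (2 * c) 0 γ - 1 / 2 * E (2 * c) δ γ := by
    funext γ
    subst hψ hφ hG
    simp only [E, psi, spikeLimit, add_zero]
    ring
  have hE (a u : ℝ) := isBigO_psi_spikeLimit_atTop s a u hs.ne'
  apply exists_pos_bound_of_isBigO_inv
  rw [hGE]
  exact ((hE _ _).sub ((hE _ _).const_mul_left _)).sub ((hE _ _).const_mul_left _)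

/-- with `ψ(x) = x − log x`, `φ_a(γ) = (γ + σ²)(γ + σ²a)/γ` and
`G_∞(γ) = ψ(φ_c(γ + δ/2)/σ²) − (1/2)ψ(φ_{2c}(γ)/σ²) − (1/2)ψ(φ_{2c}(γ + δ)/σ²)`,
one has `G_∞(γ) = −c + O(1/γ)` as `γ → +∞`: there exist `C > 0` and `γ₀ > 0` such that
`|G_∞(γ) + c| ≤ C/γ` for all `γ ≥ γ₀`. -/
theorem glr_limit_large_snr (s c δ : ℝ) (hs : 0 < s) (hc0 : 0 < c) (hc1 : c < 1 / 2)
    (hδ : 0 ≤ δ) :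
    ∀ ψ : ℝ → ℝ, ψ = (fun x => x - Real.log x) →
    ∀ φ : ℝ → ℝ → ℝ, φ = (fun a γ => (γ + s) * (γ + s * a) / γ) →
    ∀ G : ℝ → ℝ, G = (fun γ => ψ (φ c (γ + δ / 2) / s)
        - (1 / 2) * ψ (φ (2 * c) γ / s) - (1 / 2) * ψ (φ (2 * c) (γ + δ) / s)) →
    ∃ C > 0, ∃ γ₀ > 0, ∀ γ ≥ γ₀, |G γ + c| ≤ C / γ :=
  glr_limit_large_snr_general s c δ hs
end
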